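/- arXiv:1408.3330 — 7 statements merged into one kernel-verified Lean document; each statement's English description precedes it below -/
import Mathlib

section
/- Let p be a prime number and let k be a field of characteristic 0 equipped with a multiplicative nonarchimedean norm such that ‖(p : k)‖ < 1 (mixed residue characteristic p). Then the quotient k-vector space T₁ / D, where D = { f' : f ∈ T₁ } is the subspace of derivatives of elements of T₁, is infinite-dimensional over k. (Equivalently: the first naive de Rham cohomology H¹(X, Ω•) of the closed unit disk X = Spm(T₁) is an infinite-dimensional k-vector space; formal integration does not preserve convergence on the boundary.) -/
/-!
STATEMENT 0: Over a nonarchimedean normed field `k` of characteristic zero and of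
mixed residue characteristic `p` (i.e. `‖(p : k)‖ < 1` for a prime `p`), the
quotient `T₁ / D` of the Tate algebra `T₁` (power series `Σ aₙ Xⁿ` with `‖aₙ‖ → 0`)
by the subspace `D` of derivatives of elements of `T₁` is infinite dimensional over
`k`.  A power series is encoded by its coefficient sequence `ℕ → k`; the derivative
of `f` is `n ↦ (n+1) * f (n+1)`.  Infinite dimensionality of the quotient is stated
as: no finite family of elements of `T₁` spans `T₁` modulo `D`.
-/

theorem tate_algebra_mod_derivatives_infinite_dimensional
    (p : ℕ) (hp : p.Prime)
    (k : Type*) [NormedField k] [CharZero k]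
    (hna : ∀ x y : k, ‖x + y‖ ≤ max ‖x‖ ‖y‖)
    (hp_norm : ‖(p : k)‖ < 1) :
    ¬ ∃ (m : ℕ) (g : Fin m → (ℕ → k)),
        (∀ i, Filter.Tendsto (fun n => ‖g i n‖) Filter.atTop (nhds 0)) ∧
        ∀ f : ℕ → k, Filter.Tendsto (fun n => ‖f n‖) Filter.atTop (nhds 0) →
          ∃ (c : Fin m → k) (h : ℕ → k),
            Filter.Tendsto (fun n => ‖h n‖) Filter.atTop (nhds 0) ∧
            ∀ n : ℕ, f n = (∑ i, c i * g i n) + ((n + 1 : ℕ) : k) * h (n + 1) := by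
  classical
  rintro ⟨m, g, hg, hspan⟩
  have hp2 : 2 ≤ p := hp.two_le
  have hp0 : (0:ℝ) ≤ ‖(p:k)‖ := norm_nonneg _
  -- the test functions
  set F : Fin (m+1) → ℕ → k := fun s n =>
    if ∃ t, n + 1 = p ^ ((m+1)*t + s.val) then ((n+1 : ℕ) : k) else 0 with hFdef
  have hFt : ∀ s, Filter.Tendsto (fun n => ‖F s n‖) Filter.atTop (nhds 0) := by
    intro s
    have hpow : Filter.Tendsto (fun e : ℕ => ‖(p:k)‖ ^ e) Filter.atTop (nhds 0) :=
      tendsto_pow_atTop_nhds_zero_of_lt_one hp0 hp_norm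
    rw [Metric.tendsto_atTop] at hpow ⊢
    intro ε hε
    obtain ⟨E, hE⟩ := hpow ε hε
    refine ⟨p ^ E, fun n hn => ?_⟩
    by_cases hc : ∃ t, n + 1 = p ^ ((m+1)*t + s.val)
    · obtain ⟨t, ht⟩ := hc
      have hFn : F s n = ((p:k)) ^ ((m+1)*t + s.val) := by
        have h1 : F s n = ((n+1 : ℕ) : k) := by
          rw [hFdef]
          exact if_pos ⟨t, ht⟩
        rw [h1, ht]
        push_cast
        ring
      have hlt : E < (m+1)*t + s.val := by
        have : p ^ E < p ^ ((m+1)*t + s.val) := by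
          calc p ^ E ≤ n := hn
            _ < n + 1 := Nat.lt_succ_self n
            _ = p ^ ((m+1)*t + s.val) := ht
        exact (Nat.pow_lt_pow_iff_right (by omega)).mp this
      have := hE ((m+1)*t + s.val) hlt.le
      simpa [hFn, Real.dist_eq, abs_of_nonneg, norm_nonneg, pow_nonneg hp0] using this
    · simp [hFdef, if_neg hc, Real.dist_eq, hε]
  choose c h hh hrep using fun s => hspan (F s) (hFt s)
  -- find a nonzero vector killing the coefficient matrix
  set M : Matrix (Fin m) (Fin (m+1)) k := fun i s => c s i with hMdef
  have hninj : ¬ Function.Injective M.mulVecLin := by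
    intro hinj
    have h1 := LinearMap.finrank_le_finrank_of_injective hinj
    rw [Module.finrank_fin_fun, Module.finrank_fin_fun] at h1
    omega
  obtain ⟨x, y, hxy, hne⟩ := Function.not_injective_iff.mp hninj
  set lam : Fin (m+1) → k := x - y with hlamdef
  have hlam0 : M.mulVec lam = 0 := by
    have : M.mulVecLin x - M.mulVecLin y = 0 := by rw [hxy]; simp
    rw [← map_sub] at this
    simpa [Matrix.mulVecLin_apply] using this
  have hker : ∀ i, ∑ s, lam s * c s i = 0 := by
    intro i
    have := congrFun hlam0 i
    simpa [Matrix.mulVec, dotProduct, hMdef, mul_comm] using this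
  obtain ⟨s₀, hs₀⟩ : ∃ s, lam s ≠ 0 := by
    by_contra hcon
    push_neg at hcon
    exact hne (sub_eq_zero.mp (funext hcon) )
  set H : ℕ → k := fun n => ∑ s, lam s * h s n with hHdef
  have sum_eq : ∀ n : ℕ, ∑ s, lam s * F s n = ((n+1:ℕ):k) * H (n+1) := by
    intro n
    calc ∑ s, lam s * F s n
        = ∑ s, ((∑ i, lam s * c s i * g i n) + lam s * (((n+1:ℕ):k) * h s (n+1))) := by
          refine Finset.sum_congr rfl fun s _ => ?_
          rw [hrep s n, mul_add, Finset.mul_sum]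
          simp [mul_assoc]
      _ = (∑ s, ∑ i, lam s * c s i * g i n) + ∑ s, lam s * (((n+1:ℕ):k) * h s (n+1)) :=
          Finset.sum_add_distrib
      _ = (∑ i, (∑ s, lam s * c s i) * g i n) + ((n+1:ℕ):k) * H (n+1) := by
          rw [Finset.sum_comm]
          congr 1
          · exact Finset.sum_congr rfl fun i _ => (Finset.sum_mul _ _ _).symm
          · rw [hHdef, Finset.mul_sum]
            exact Finset.sum_congr rfl fun s _ => by ring
      _ = ((n+1:ℕ):k) * H (n+1) := by
          simp [hker]
  -- H tends to zero
  have hHt : Filter.Tendsto H Filter.atTop (nhds 0) := by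
    have : Filter.Tendsto (fun n => ∑ s : Fin (m+1), lam s * h s n) Filter.atTop
        (nhds (∑ s : Fin (m+1), (0:k))) := by
      refine tendsto_finset_sum _ fun s _ => ?_
      have hs : Filter.Tendsto (fun n => h s n) Filter.atTop (nhds 0) :=
        tendsto_zero_iff_norm_tendsto_zero.mpr (hh s)
      simpa using hs.const_mul (lam s)
    simpa [hHdef] using this
  -- evaluate along the subsequence
  have hval : ∀ t : ℕ, H (p ^ ((m+1)*t + s₀.val)) = lam s₀ := by
    intro t
    set e : ℕ := (m+1)*t + s₀.val with hedef
    have hpe : 1 ≤ p ^ e := Nat.one_le_pow _ _ (by omega)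
    set n : ℕ := p ^ e - 1 with hndef
    have hn1 : n + 1 = p ^ e := by omega
    have hF0 : ∀ s : Fin (m+1), s ≠ s₀ → F s n = 0 := by
      intro s hs
      rw [hFdef]
      simp only
      rw [if_neg]
      rintro ⟨t', ht'⟩
      rw [hn1] at ht'
      have heq : e = (m+1)*t' + s.val := Nat.pow_right_injective hp2 ht'
      rw [hedef] at heq
      have hmod := congrArg (· % (m+1)) heq
      simp only [Nat.mul_add_mod] at hmod
      have h1 : s₀.val < m + 1 := s₀.isLt
      have h2 : s.val < m + 1 := s.isLt
      rw [Nat.mod_eq_of_lt h1, Nat.mod_eq_of_lt h2] at hmod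
      exact hs (Fin.ext hmod.symm)
    have hFs₀ : F s₀ n = ((n+1:ℕ):k) := by
      rw [hFdef]
      simp only
      rw [if_pos ⟨t, by rw [hn1]⟩]
    have hsum : ∑ s, lam s * F s n = lam s₀ * ((n+1:ℕ):k) := by
      rw [Finset.sum_eq_single s₀]
      · rw [hFs₀]
      · intro s _ hs; rw [hF0 s hs, mul_zero]
      · intro habs; exact absurd (Finset.mem_univ s₀) habs
    have := (sum_eq n).symm.trans hsum
    have hne0 : ((n+1:ℕ):k) ≠ 0 := Nat.cast_ne_zero.mpr (by omega)
    have h' : ((n+1:ℕ):k) * H (n+1) = ((n+1:ℕ):k) * lam s₀ := by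
      rw [this]; ring
    have : H (n+1) = lam s₀ := mul_left_cancel₀ hne0 h'
    rwa [hn1] at this
  -- contradiction
  have hsub : Filter.Tendsto (fun t : ℕ => p ^ ((m+1)*t + s₀.val)) Filter.atTop Filter.atTop := by
    apply Filter.tendsto_atTop_mono (fun t => ?_) Filter.tendsto_id
    calc t ≤ (m+1)*t + s₀.val := by nlinarith [Nat.zero_le s₀.val]
      _ ≤ p ^ ((m+1)*t + s₀.val) := Nat.le_of_lt (Nat.lt_pow_self (by omega : 1 < p))
    
  have : Filter.Tendsto (fun t : ℕ => H (p ^ ((m+1)*t + s₀.val))) Filter.atTop (nhds 0) :=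
    hHt.comp hsub
  rw [show (fun t : ℕ => H (p ^ ((m+1)*t + s₀.val))) = fun _ => lam s₀ from funext hval] at this
  exact hs₀ (tendsto_nhds_unique tendsto_const_nhds this)
end

section
/- Let k be a field of characteristic 0 equipped with a multiplicative nonarchimedean norm, and let ε > 0 be a real number. If f = Σ_{n≥0} aₙXⁿ ∈ k[[X]] satisfies ‖aₙ‖ρⁿ → 0 as n → ∞ for some real ρ > ε (i.e. f is overconvergent on the disk of radius ε), then there exists g = Σ_{n≥0} bₙXⁿ ∈ k[[X]] with ‖bₙ‖ρ'ⁿ → 0 as n → ∞ for some real ρ' > ε, such that g' = f. (Formal integration preserves overconvergence: the derivative map on the ring of overconvergent power series on the disk of radius ε is surjective; this is the one-variable case of the vanishing H^i_dR(Spm(Tₙ)) = 0 for i > 0 computed via the dagger space Spm(Wₙ).) -/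
/-!
STATEMENT 1: Over a nonarchimedean normed field `k` of characteristic zero, formal
integration preserves overconvergence: if the power series `f = Σ aₙ Xⁿ` (encoded by
its coefficient sequence `a : ℕ → k`) satisfies `‖aₙ‖ ρⁿ → 0` for some `ρ > ε`, then
there is a power series `g = Σ bₙ Xⁿ` with `‖bₙ‖ ρ'ⁿ → 0` for some `ρ' > ε` whose
derivative `n ↦ (n+1) b_{n+1}` equals `f`.
-/

/-- In a nonarchimedean normed field, natural numbers have norm at most 1. -/
lemma aux_nat_norm_le_one (k : Type*) [NormedField k]
    (hna : ∀ x y : k, ‖x + y‖ ≤ max ‖x‖ ‖y‖) (n : ℕ) : ‖(n : k)‖ ≤ 1 := by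
  induction n with
  | zero => simp
  | succ n ih =>
    push_cast
    calc ‖(n : k) + 1‖ ≤ max ‖(n : k)‖ ‖(1 : k)‖ := hna _ _
    _ ≤ 1 := by simp [ih]

/-- In a nonarchimedean normed field of characteristic zero, norms of positive
natural numbers admit a polynomial lower bound. -/
lemma aux_nat_norm_lower_bound (k : Type*) [NormedField k] [CharZero k]
    (hna : ∀ x y : k, ‖x + y‖ ≤ max ‖x‖ ‖y‖) :
    ∃ m : ℕ, ∀ n : ℕ, 0 < n → ((n : ℝ) ^ m)⁻¹ ≤ ‖(n : k)‖ := by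
  have hle1 := aux_nat_norm_le_one k hna
  by_cases H : ∀ n : ℕ, 0 < n → ‖(n : k)‖ = 1
  · exact ⟨0, fun n hn => by simp [H n hn]⟩
  push_neg at H
  -- there is a least positive natural number of norm < 1
  have Hex : ∃ n : ℕ, 0 < n ∧ ‖(n : k)‖ < 1 := by
    obtain ⟨n, hn, hne⟩ := H
    exact ⟨n, hn, lt_of_le_of_ne (hle1 n) hne⟩
  classical
  set q := Nat.find Hex with hq_def
  obtain ⟨hq_pos, hq_lt⟩ : 0 < q ∧ ‖(q : k)‖ < 1 := Nat.find_spec Hex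
  have hmin : ∀ r : ℕ, 0 < r → r < q → ‖(r : k)‖ = 1 := by
    intro r hr hrq
    have := Nat.find_min Hex hrq
    push_neg at this
    exact le_antisymm (hle1 r) (this hr)
  have hc_pos : 0 < ‖(q : k)‖ := by
    rw [norm_pos_iff]
    exact_mod_cast hq_pos.ne'
  have hq1 : 1 < q := by
    by_contra h
    have : q = 1 := by omega
    rw [this] at hq_lt
    simp at hq_lt
  -- every positive natural not divisible by q has norm 1
  have hcop : ∀ n : ℕ, 0 < n → ¬ q ∣ n → ‖(n : k)‖ = 1 := by
    intro n hn hdvd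
    have hr_pos : 0 < n % q := by
      rcases Nat.eq_zero_or_pos (n % q) with h | h
      · exact absurd (Nat.dvd_of_mod_eq_zero h) hdvd
      · exact h
    have hr_lt : n % q < q := Nat.mod_lt _ hq_pos
    have hr_one : ‖((n % q : ℕ) : k)‖ = 1 := hmin _ hr_pos hr_lt
    have hsplit : ((n % q : ℕ) : k) = (n : k) + (-(((q : k)) * ((n / q : ℕ) : k))) := by
      have h := Nat.div_add_mod n q
      have h2 : ((q * (n / q) + n % q : ℕ) : k) = ((n : ℕ) : k) := by rw [h]
      push_cast at h2 ⊢
      linear_combination h2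
    have hsmall : ‖(-(((q : k)) * ((n / q : ℕ) : k)))‖ < 1 := by
      rw [norm_neg, norm_mul]
      calc ‖(q : k)‖ * ‖((n / q : ℕ) : k)‖ ≤ ‖(q : k)‖ * 1 :=
        mul_le_mul_of_nonneg_left (hle1 _) (norm_nonneg _)
      _ < 1 := by simpa using hq_lt
    have hge : 1 ≤ ‖(n : k)‖ := by
      have := hna ((n : k)) (-(((q : k)) * ((n / q : ℕ) : k)))
      rw [← hsplit, hr_one] at this
      rcases le_max_iff.mp this with h | h
      · exact h
      · exact absurd (lt_of_le_of_lt h hsmall) (lt_irrefl 1)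
    exact le_antisymm (hle1 n) hge
  -- choose m with 2^(-m) ≤ ‖q‖
  obtain ⟨m, hm⟩ := pow_unbounded_of_one_lt (‖(q : k)‖)⁻¹ (by norm_num : (1:ℝ) < 2)
  have hcm : ((2 : ℝ) ^ m)⁻¹ ≤ ‖(q : k)‖ := by
    rw [inv_le_comm₀ (by positivity) hc_pos]
    exact hm.le
  refine ⟨m, fun n hn => ?_⟩
  obtain ⟨v, w, hw, rfl⟩ := Nat.exists_eq_pow_mul_and_not_dvd hn.ne' q (by omega)
  have hw_pos : 0 < w := by
    rcases Nat.eq_zero_or_pos w with h | h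
    · simp [h] at hn
    · exact h
  have hnorm : ‖((q ^ v * w : ℕ) : k)‖ = ‖(q : k)‖ ^ v := by
    push_cast
    rw [norm_mul, norm_pow, hcop w hw_pos hw, mul_one]
  rw [hnorm]
  have h2v : (2 : ℝ) ^ v ≤ ((q ^ v * w : ℕ) : ℝ) := by
    have : 2 ^ v ≤ q ^ v * w := by
      calc 2 ^ v ≤ q ^ v := Nat.pow_le_pow_left hq1 v
      _ ≤ q ^ v * w := Nat.le_mul_of_pos_right _ hw_pos
    exact_mod_cast this
  calc (((q ^ v * w : ℕ) : ℝ) ^ m)⁻¹ ≤ (((2 : ℝ) ^ v) ^ m)⁻¹ := by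
        apply inv_anti₀ (by positivity)
        exact pow_le_pow_left₀ (by positivity) h2v m
  _ = (((2 : ℝ) ^ m)⁻¹) ^ v := by rw [inv_pow, ← pow_mul, ← pow_mul, Nat.mul_comm]
  _ ≤ ‖(q : k)‖ ^ v := pow_le_pow_left₀ (by positivity) hcm v

theorem formal_integration_preserves_overconvergence
    (k : Type*) [NormedField k] [CharZero k]
    (hna : ∀ x y : k, ‖x + y‖ ≤ max ‖x‖ ‖y‖)
    (ε : ℝ) (hε : 0 < ε)
    (a : ℕ → k)
    (ha : ∃ ρ : ℝ, ε < ρ ∧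
      Filter.Tendsto (fun n => ‖a n‖ * ρ ^ n) Filter.atTop (nhds 0)) :
    ∃ (b : ℕ → k) (ρ' : ℝ), ε < ρ' ∧
      Filter.Tendsto (fun n => ‖b n‖ * ρ' ^ n) Filter.atTop (nhds 0) ∧
      ∀ n : ℕ, ((n + 1 : ℕ) : k) * b (n + 1) = a n := by
  obtain ⟨ρ, hρ, hte⟩ := ha
  obtain ⟨m, hm⟩ := aux_nat_norm_lower_bound k hna
  have hρ0 : 0 < ρ := hε.trans hρ
  set ρ' := (ε + ρ) / 2 with hρ'_def
  have hρ'1 : ε < ρ' := by rw [hρ'_def]; linarith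
  have hρ'2 : ρ' < ρ := by rw [hρ'_def]; linarith
  have hρ'0 : 0 < ρ' := hε.trans hρ'1
  set r := ρ' / ρ with hr_def
  have hr0 : 0 < r := div_pos hρ'0 hρ0
  have hr1 : r < 1 := (div_lt_one hρ0).mpr hρ'2
  refine ⟨fun n => Nat.rec 0 (fun n _ => a n / ((n + 1 : ℕ) : k)) n, ρ', hρ'1, ?_, ?_⟩
  · -- convergence
    rw [← Filter.tendsto_add_atTop_iff_nat 1]
    apply squeeze_zero (fun n => by positivity)
      (g := fun n => (‖a n‖ * ρ ^ n) * (((n : ℝ) + 1) ^ m * r ^ n * ρ'))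
    · intro n
      show ‖a n / ((n + 1 : ℕ) : k)‖ * ρ' ^ (n + 1) ≤ _
      rw [norm_div]
      have hpos : 0 < ‖((n + 1 : ℕ) : k)‖ := by
        rw [norm_pos_iff]; exact_mod_cast (Nat.succ_ne_zero n)
      have hinv : ‖((n + 1 : ℕ) : k)‖⁻¹ ≤ ((n : ℝ) + 1) ^ m := by
        rw [inv_le_comm₀ hpos (by positivity : (0:ℝ) < ((n : ℝ) + 1) ^ m)]
        calc (((n : ℝ) + 1) ^ m)⁻¹ = ((((n + 1 : ℕ)) : ℝ) ^ m)⁻¹ := by norm_cast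
        _ ≤ ‖((n + 1 : ℕ) : k)‖ := hm (n + 1) (Nat.succ_pos n)
      calc ‖a n‖ / ‖((n + 1 : ℕ) : k)‖ * ρ' ^ (n + 1)
          ≤ ‖a n‖ * ((n : ℝ) + 1) ^ m * ρ' ^ (n + 1) := by
            rw [div_eq_mul_inv]
            have : ‖a n‖ * ‖((n + 1 : ℕ) : k)‖⁻¹ ≤ ‖a n‖ * ((n : ℝ) + 1) ^ m :=
              mul_le_mul_of_nonneg_left hinv (norm_nonneg _)
            exact mul_le_mul_of_nonneg_right this (by positivity)
      _ = (‖a n‖ * ρ ^ n) * (((n : ℝ) + 1) ^ m * r ^ n * ρ') := by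
            have hρr : ρ * r = ρ' := by rw [hr_def]; field_simp
            have hpw : ρ' ^ (n + 1) = ρ' * (ρ ^ n * r ^ n) := by
              rw [← mul_pow, hρr, pow_succ]; ring
            rw [hpw]; ring
    · have t2 : Filter.Tendsto (fun n : ℕ => ((n : ℝ) + 1) ^ m * r ^ n * ρ')
          Filter.atTop (nhds 0) := by
        have T := tendsto_pow_const_mul_const_pow_of_lt_one m hr0.le hr1
        have T1 : Filter.Tendsto (fun n : ℕ => ((n + 1 : ℕ) : ℝ) ^ m * r ^ (n + 1))
            Filter.atTop (nhds 0) := (Filter.tendsto_add_atTop_iff_nat 1).mpr T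
        have T2 := T1.mul_const (ρ' / r)
        rw [zero_mul] at T2
        convert T2 using 2 with n
        push_cast
        rw [pow_succ]
        field_simp
      simpa using hte.mul t2
  · intro n
    show ((n + 1 : ℕ) : k) * (a n / ((n + 1 : ℕ) : k)) = a n
    rw [mul_div_cancel₀]
    exact_mod_cast (Nat.succ_ne_zero n)
end

section
/- Let k be a field of characteristic 0 equipped with a multiplicative nonarchimedean norm. Then there exists a real constant c ≥ 0 such that ‖(n : k)‖ ≥ n^{-c} for every natural number n ≥ 1. (The restriction of the norm to ℚ is either trivial or equivalent to a p-adic absolute value, so the norms of the integers decay at most polynomially; this bound underlies the fact that formal integration preserves (over)convergence radii.) -/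
/-!
STATEMENT 2: For a nonarchimedean normed field `k` of characteristic zero, there is
a constant `c ≥ 0` such that `‖(n : k)‖ ≥ n ^ (-c)` for every natural number `n ≥ 1`
(the norms of the integers decay at most polynomially).  Here `n ^ (-c)` is the real
power `Real.rpow`.
-/

theorem norm_nat_ge_rpow_neg_const
    (k : Type*) [NormedField k] [CharZero k]
    (hna : ∀ x y : k, ‖x + y‖ ≤ max ‖x‖ ‖y‖) :
    ∃ c : ℝ, 0 ≤ c ∧ ∀ n : ℕ, 1 ≤ n → (n : ℝ) ^ (-c) ≤ ‖(n : k)‖ := by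
  -- norms of natural numbers are at most 1
  have hnat : ∀ n : ℕ, ‖(n : k)‖ ≤ 1 := by
    intro n
    induction n with
    | zero => simp
    | succ m ih =>
      push_cast
      calc ‖(m : k) + 1‖ ≤ max ‖(m : k)‖ ‖(1 : k)‖ := hna _ _
        _ ≤ 1 := by simp [ih]
  have hint : ∀ m : ℤ, ‖(m : k)‖ ≤ 1 := by
    intro m
    obtain ⟨a, rfl | rfl⟩ := m.eq_nat_or_neg
    · exact_mod_cast hnat a
    · push_cast
      simpa using hnat a
  -- norm via prime factorization
  have hfac : ∀ n : ℕ, n ≠ 0 →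
      ‖(n : k)‖ = ∏ q ∈ n.factorization.support, ‖(q : k)‖ ^ n.factorization q := by
    intro n hn
    conv_lhs => rw [← Nat.factorization_prod_pow_eq_self hn]
    rw [Finsupp.prod]
    push_cast
    rw [norm_prod]
    simp [norm_pow]
  by_cases H : ∀ q : ℕ, q.Prime → ‖(q : k)‖ = 1
  · -- trivial case: all primes have norm 1
    refine ⟨0, le_rfl, fun n hn => ?_⟩
    have hn0 : n ≠ 0 := by omega
    rw [neg_zero, Real.rpow_zero, hfac n hn0]
    rw [Finset.prod_eq_one]
    intro q hq
    rw [H q (Nat.prime_of_mem_primeFactors (by rwa [Nat.support_factorization] at hq)),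
      one_pow]
  · push_neg at H
    obtain ⟨p, hp, hpne⟩ := H
    set t : ℝ := ‖(p : k)‖ with ht
    have hpk : (p : k) ≠ 0 := Nat.cast_ne_zero.mpr hp.ne_zero
    have ht0 : 0 < t := norm_pos_iff.mpr hpk
    have ht1 : t < 1 := lt_of_le_of_ne (hnat p) hpne
    -- any other prime has norm 1
    have huniq : ∀ q : ℕ, q.Prime → q ≠ p → ‖(q : k)‖ = 1 := by
      intro q hq hqp
      by_contra hne
      have hq1 : ‖(q : k)‖ < 1 := lt_of_le_of_ne (hnat q) hne
      have hcop : Nat.Coprime q p := (Nat.coprime_primes hq hp).mpr hqp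
      -- Bezout: 1 = q * A + p * B in ℤ
      have hgcd : (1 : ℤ) = (q : ℤ) * Int.gcdA q p + (p : ℤ) * Int.gcdB q p := by
        have := Int.gcd_eq_gcd_ab (q : ℤ) (p : ℤ)
        rwa [Int.gcd_natCast_natCast, hcop.gcd_eq_one, Nat.cast_one] at this
      have h1 : (1 : k) = (q : k) * ((Int.gcdA q p : ℤ) : k)
          + (p : k) * ((Int.gcdB q p : ℤ) : k) := by
        have := congrArg (fun z : ℤ => ((z : ℤ) : k)) hgcd
        push_cast at this ⊢
        exact this
      have : (1 : ℝ) ≤ max ‖(q : k)‖ ‖(p : k)‖ := by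
        calc (1 : ℝ) = ‖(1 : k)‖ := (norm_one).symm
          _ = ‖(q : k) * ((Int.gcdA q p : ℤ) : k) + (p : k) * ((Int.gcdB q p : ℤ) : k)‖ := by
              rw [← h1]
          _ ≤ max ‖(q : k) * ((Int.gcdA q p : ℤ) : k)‖ ‖(p : k) * ((Int.gcdB q p : ℤ) : k)‖ :=
              hna _ _
          _ ≤ max ‖(q : k)‖ ‖(p : k)‖ := by
              apply max_le_max <;>
              · rw [norm_mul]
                exact mul_le_of_le_one_right (norm_nonneg _) (hint _)
      have : (1 : ℝ) < 1 := lt_of_le_of_lt this (max_lt hq1 ht1)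
      exact absurd this (lt_irrefl 1)
    -- norm of n equals t ^ (p-adic valuation of n)
    have hnorm : ∀ n : ℕ, n ≠ 0 → ‖(n : k)‖ = t ^ n.factorization p := by
      intro n hn
      rw [hfac n hn]
      by_cases hps : p ∈ n.factorization.support
      · refine Finset.prod_eq_single_of_mem p hps fun q hq hqp => ?_
        rw [huniq q (Nat.prime_of_mem_primeFactors
          (by rwa [Nat.support_factorization] at hq)) hqp, one_pow]
      · rw [Finsupp.notMem_support_iff.mp hps, pow_zero]
        refine Finset.prod_eq_one fun q hq => ?_
        have hqp : q ≠ p := fun h => hps (h ▸ hq)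
        rw [huniq q (Nat.prime_of_mem_primeFactors
          (by rwa [Nat.support_factorization] at hq)) hqp, one_pow]
    -- define the constant
    have hp1 : (1 : ℝ) < (p : ℝ) := by exact_mod_cast hp.one_lt
    have hp0 : (0 : ℝ) < (p : ℝ) := lt_trans one_pos hp1
    refine ⟨-Real.logb p t, ?_, ?_⟩
    · rw [neg_nonneg]
      exact (Real.logb_neg hp1 ht0 ht1).le
    · intro n hn
      have hn0 : n ≠ 0 := by omega
      rw [hnorm n hn0, neg_neg]
      set v := n.factorization p with hv
      have hple : (p : ℝ) ^ v ≤ (n : ℝ) := by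
        exact_mod_cast Nat.le_of_dvd (by omega) (Nat.ordProj_dvd n p)
      have hpt : (p : ℝ) ^ (Real.logb p t) = t := Real.rpow_logb hp0 (ne_of_gt hp1) ht0
      have key : ((p : ℝ) ^ v : ℝ) ^ (Real.logb p t) = t ^ v := by
        rw [← Real.rpow_natCast (p : ℝ) v, ← Real.rpow_mul hp0.le, mul_comm,
          Real.rpow_mul hp0.le, hpt, Real.rpow_natCast]
      rw [← key]
      exact Real.rpow_le_rpow_of_nonpos (by positivity) hple
        (Real.logb_neg hp1 ht0 ht1).le
end

section
/- Let k be a field of characteristic 0 equipped with a multiplicative nonarchimedean norm, and let ε > 0 be a real number. If f = Σ_{n≥0} aₙXⁿ ∈ k[[X]] satisfies ‖aₙ‖ρⁿ → 0 as n → ∞ for every real ρ with 0 < ρ < ε (i.e. f converges on the open disk of radius ε), then there exists g = Σ_{n≥0} bₙXⁿ ∈ k[[X]] satisfying the same convergence condition (‖bₙ‖ρⁿ → 0 for every 0 < ρ < ε) such that g' = f. (Formal integration preserves the radius of convergence; the de Rham cohomology of the open polydisk D⁰ is trivial in positive degrees, as used in the proof that tubes are de Rham invariant under smooth immersions of formal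 schemes.) -/
/-!
STATEMENT 3: Over a nonarchimedean normed field `k` of characteristic zero, formal
integration preserves the radius of convergence: if the coefficient sequence
`a : ℕ → k` of `f = Σ aₙ Xⁿ` satisfies `‖aₙ‖ ρⁿ → 0` for every `0 < ρ < ε` (i.e. `f`
converges on the open disk of radius `ε`), then there is `g = Σ bₙ Xⁿ` satisfying
the same convergence condition with derivative `n ↦ (n+1) b_{n+1}` equal to `f`.
-/

section FormalIntegrationAux

variable {k : Type*} [NormedField k] [CharZero k]
variable (hna : ∀ x y : k, ‖x + y‖ ≤ max ‖x‖ ‖y‖)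

include hna in
/-- In a nonarchimedean normed field, natural numbers have norm at most one. -/
lemma FormalIntegration.nat_norm_le_one (m : ℕ) : ‖(m : k)‖ ≤ 1 := by
  induction m with
  | zero => simp
  | succ n ih =>
    push_cast
    calc ‖(n : k) + 1‖ ≤ max ‖(n : k)‖ ‖(1 : k)‖ := hna _ _
      _ ≤ 1 := by simp [ih]

include hna in
/-- In a nonarchimedean normed field, integers have norm at most one. -/
lemma FormalIntegration.int_norm_le_one (z : ℤ) : ‖(z : k)‖ ≤ 1 := by
  obtain ⟨n, rfl | rfl⟩ := Int.eq_nat_or_neg z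
  · push_cast; exact FormalIntegration.nat_norm_le_one hna n
  · push_cast; rw [norm_neg]; exact FormalIntegration.nat_norm_le_one hna n

include hna in
/-- At most one prime can have norm `< 1` (via a Bézout relation). -/
lemma FormalIntegration.prime_norm_eq_one {p q : ℕ} (hp : p.Prime) (hq : q.Prime)
    (hpq : p ≠ q) (hcp : ‖(p : k)‖ < 1) : ‖(q : k)‖ = 1 := by
  have hco : IsCoprime (p : ℤ) (q : ℤ) := by
    rw [Int.isCoprime_iff_gcd_eq_one]
    exact_mod_cast (Nat.coprime_primes hp hq).mpr hpq
  obtain ⟨u, v, huv⟩ := hco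
  have h1 : (1 : k) = (u : k) * (p : k) + (v : k) * (q : k) := by
    have := congrArg (fun z : ℤ => (z : k)) huv
    push_cast at this
    exact this.symm
  have hle : (1 : ℝ) ≤ max (‖(u : k)‖ * ‖(p : k)‖) (‖(v : k)‖ * ‖(q : k)‖) := by
    calc (1 : ℝ) = ‖(1 : k)‖ := (norm_one).symm
      _ = ‖(u : k) * (p : k) + (v : k) * (q : k)‖ := by rw [← h1]
      _ ≤ max ‖(u : k) * (p : k)‖ ‖(v : k) * (q : k)‖ := hna _ _
      _ = max (‖(u : k)‖ * ‖(p : k)‖) (‖(v : k)‖ * ‖(q : k)‖) := by rw [norm_mul, norm_mul]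
  have hq1 : ‖(q : k)‖ ≤ 1 := FormalIntegration.nat_norm_le_one hna q
  have hup : ‖(u : k)‖ * ‖(p : k)‖ < 1 := by
    have := FormalIntegration.int_norm_le_one hna u
    have hnn : (0:ℝ) ≤ ‖(u : k)‖ := norm_nonneg _
    nlinarith [norm_nonneg ((p : k))]
  have hv : ‖(v : k)‖ ≤ 1 := FormalIntegration.int_norm_le_one hna v
  have : (1:ℝ) ≤ ‖(v : k)‖ * ‖(q : k)‖ := by
    rcases max_cases (‖(u : k)‖ * ‖(p : k)‖) (‖(v : k)‖ * ‖(q : k)‖) with ⟨h, _⟩ | ⟨h, h2⟩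
    · rw [h] at hle; linarith
    · rw [h] at hle; linarith
  have : (1:ℝ) ≤ ‖(q : k)‖ := by nlinarith [norm_nonneg ((q : k))]
  linarith

include hna in
/-- There is a uniform polynomial lower bound at primes: `‖q‖ ≥ q^(-β)`. -/
lemma FormalIntegration.exists_beta :
    ∃ β : ℝ, 0 ≤ β ∧ ∀ q : ℕ, q.Prime → (q : ℝ) ^ (-β) ≤ ‖(q : k)‖ := by
  by_cases h : ∃ p : ℕ, p.Prime ∧ ‖(p : k)‖ < 1
  · obtain ⟨p, hp, hcp⟩ := h
    have hp0 : (p : k) ≠ 0 := Nat.cast_ne_zero.mpr hp.ne_zero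
    have hc0 : (0 : ℝ) < ‖(p : k)‖ := norm_pos_iff.mpr hp0
    have hp1 : (1 : ℝ) < (p : ℝ) := by exact_mod_cast hp.one_lt
    have hlogp : (0 : ℝ) < Real.log p := Real.log_pos hp1
    have hlogc : Real.log ‖(p : k)‖ < 0 := Real.log_neg hc0 hcp
    refine ⟨-Real.log ‖(p : k)‖ / Real.log p, div_nonneg (by linarith) hlogp.le, ?_⟩
    intro q hq
    by_cases hqp : q = p
    · subst hqp
      have : (q : ℝ) ^ (-(-Real.log ‖(q : k)‖ / Real.log q)) = ‖(q : k)‖ := by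
        rw [Real.rpow_def_of_pos (by positivity)]
        rw [show Real.log (q:ℝ) * -(-Real.log ‖(q : k)‖ / Real.log (q:ℝ))
              = Real.log ‖(q : k)‖ by field_simp]
        exact Real.exp_log hc0
      rw [this]
    · have h1 : ‖(q : k)‖ = 1 :=
        FormalIntegration.prime_norm_eq_one hna hp hq (fun e => hqp e.symm) hcp
      rw [h1]
      apply Real.rpow_le_one_of_one_le_of_nonpos
      · exact_mod_cast hq.one_lt.le
      · have : (0:ℝ) ≤ -Real.log ‖(p : k)‖ / Real.log p :=
          div_nonneg (by linarith) hlogp.le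
        linarith
  · push_neg at h
    refine ⟨0, le_refl _, ?_⟩
    intro q hq
    rw [neg_zero, Real.rpow_zero]
    exact h q hq

/-- The polynomial lower bound at primes extends to all positive naturals. -/
lemma FormalIntegration.norm_nat_ge {β : ℝ} (_hβ : 0 ≤ β)
    (hprime : ∀ q : ℕ, q.Prime → (q : ℝ) ^ (-β) ≤ ‖(q : k)‖) :
    ∀ n : ℕ, 1 ≤ n → (n : ℝ) ^ (-β) ≤ ‖(n : k)‖ := by
  intro n
  induction n using Nat.strong_induction_on with
  | _ n ih =>
    intro hn
    rcases eq_or_lt_of_le hn with h1 | h2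
    · simp [← h1]
    · have hn2 : 2 ≤ n := h2
      set q := n.minFac with hq
      have hqp : q.Prime := Nat.minFac_prime (by omega)
      have hqd : q ∣ n := Nat.minFac_dvd n
      obtain ⟨m, hm⟩ := hqd
      have hm1 : 1 ≤ m := by
        rcases Nat.eq_zero_or_pos m with h | h
        · subst h; simp at hm; omega
        · exact h
      have hmn : m < n := by
        have := hqp.two_le
        calc m < 2 * m := by omega
          _ ≤ q * m := Nat.mul_le_mul_right m this
          _ = n := hm.symm
      have ihm := ih m hmn hm1
      have hcast : (n : ℝ) = (q : ℝ) * (m : ℝ) := by exact_mod_cast congrArg (Nat.cast : ℕ → ℝ) hm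
      have hkcast : (n : k) = (q : k) * (m : k) := by exact_mod_cast congrArg (Nat.cast : ℕ → k) hm
      rw [hkcast, norm_mul, hcast, Real.mul_rpow (by positivity) (by positivity)]
      exact mul_le_mul (hprime q hqp) ihm (by positivity) (norm_nonneg _)

end FormalIntegrationAux

theorem formal_integration_preserves_radius_of_convergence
    (k : Type*) [NormedField k] [CharZero k]
    (hna : ∀ x y : k, ‖x + y‖ ≤ max ‖x‖ ‖y‖)
    (ε : ℝ) (hε : 0 < ε)
    (a : ℕ → k)
    (ha : ∀ ρ : ℝ, 0 < ρ → ρ < ε →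
      Filter.Tendsto (fun n => ‖a n‖ * ρ ^ n) Filter.atTop (nhds 0)) :
    ∃ b : ℕ → k,
      (∀ ρ : ℝ, 0 < ρ → ρ < ε →
        Filter.Tendsto (fun n => ‖b n‖ * ρ ^ n) Filter.atTop (nhds 0)) ∧
      ∀ n : ℕ, ((n + 1 : ℕ) : k) * b (n + 1) = a n := by
  obtain ⟨β, hβ, hprime⟩ := FormalIntegration.exists_beta hna
  have hlow := FormalIntegration.norm_nat_ge hβ hprime
  set K := ⌈β⌉₊ with hK
  have hβK : β ≤ (K : ℝ) := Nat.le_ceil β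
  refine ⟨fun n => if n = 0 then 0 else a (n - 1) / (n : k), ?_, ?_⟩
  · intro ρ hρ0 hρε
    set ρ' := (ρ + ε) / 2 with hρ'
    have hρ'0 : 0 < ρ' := by positivity
    have hρρ' : ρ < ρ' := by rw [hρ']; linarith
    have hρ'ε : ρ' < ε := by rw [hρ']; linarith
    set r := ρ / ρ' with hrdef
    have hr0 : 0 < r := by positivity
    have hr1 : r < 1 := (div_lt_one hρ'0).mpr hρρ'
    have haρ' := ha ρ' hρ'0 hρ'ε
    rw [← Filter.tendsto_add_atTop_iff_nat 1]
    have h0 : Filter.Tendsto (fun n : ℕ => (n : ℝ) ^ K * r ^ n)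
        Filter.atTop (nhds 0) :=
      tendsto_pow_const_mul_const_pow_of_abs_lt_one K
        (by rw [abs_of_pos hr0]; exact hr1)
    have hshift : Filter.Tendsto (fun n : ℕ => ((n + 1 : ℕ) : ℝ) ^ K * r ^ (n + 1))
        Filter.atTop (nhds 0) := h0.comp (Filter.tendsto_add_atTop_nat 1)
    have hg : Filter.Tendsto (fun n : ℕ => ((n + 1 : ℕ) : ℝ) ^ K * r ^ n)
        Filter.atTop (nhds 0) := by
      have h2 := hshift.const_mul (r⁻¹)
      rw [mul_zero] at h2
      refine h2.congr fun n => ?_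
      rw [pow_succ]
      field_simp
    have hmain : Filter.Tendsto
        (fun n : ℕ => (ρ * (‖a n‖ * ρ' ^ n)) * (((n + 1 : ℕ) : ℝ) ^ K * r ^ n))
        Filter.atTop (nhds 0) := by
      have := (haρ'.const_mul ρ).mul hg
      simpa using this
    apply squeeze_zero (fun n => by positivity) _ hmain
    intro n
    have hne : (n + 1 : ℕ) ≠ 0 := Nat.succ_ne_zero n
    have hc0 : (0 : ℝ) < ‖((n + 1 : ℕ) : k)‖ :=
      norm_pos_iff.mpr (Nat.cast_ne_zero.mpr hne)
    have hlown := hlow (n + 1) (by omega)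
    have hx1 : (1 : ℝ) ≤ ((n + 1 : ℕ) : ℝ) := by exact_mod_cast Nat.one_le_iff_ne_zero.mpr hne
    have hxpos : (0 : ℝ) < ((n + 1 : ℕ) : ℝ) := by linarith
    have hinv : ‖((n + 1 : ℕ) : k)‖⁻¹ ≤ ((n + 1 : ℕ) : ℝ) ^ β := by
      rw [Real.rpow_neg hxpos.le] at hlown
      have hb : (0 : ℝ) < ((n + 1 : ℕ) : ℝ) ^ β := Real.rpow_pos_of_pos hxpos β
      rw [inv_le_comm₀ hc0 hb]
      exact hlown
    have hβK' : ((n + 1 : ℕ) : ℝ) ^ β ≤ ((n + 1 : ℕ) : ℝ) ^ K := by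
      rw [← Real.rpow_natCast (((n + 1 : ℕ) : ℝ)) K]
      exact Real.rpow_le_rpow_of_exponent_le hx1 hβK
    have hinvK : ‖((n + 1 : ℕ) : k)‖⁻¹ ≤ ((n + 1 : ℕ) : ℝ) ^ K := hinv.trans hβK'
    have hpow : ρ ^ (n + 1) = ρ * (ρ' ^ n * r ^ n) := by
      rw [← mul_pow, hrdef, mul_comm ρ' (ρ / ρ'), div_mul_cancel₀ _ (ne_of_gt hρ'0),
        pow_succ]
      ring
    simp only [Nat.succ_ne_zero, if_false, Nat.add_sub_cancel]
    calc ‖a n / ((n + 1 : ℕ) : k)‖ * ρ ^ (n + 1)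
        = (‖a n‖ * ‖((n + 1 : ℕ) : k)‖⁻¹) * ρ ^ (n + 1) := by
          rw [norm_div, div_eq_mul_inv]
      _ ≤ (‖a n‖ * ((n + 1 : ℕ) : ℝ) ^ K) * ρ ^ (n + 1) := by
          apply mul_le_mul_of_nonneg_right _ (by positivity)
          exact mul_le_mul_of_nonneg_left hinvK (norm_nonneg _)
      _ = (ρ * (‖a n‖ * ρ' ^ n)) * (((n + 1 : ℕ) : ℝ) ^ K * r ^ n) := by
          rw [hpow]; ring
  · intro n
    simp only [Nat.succ_ne_zero, if_false, Nat.add_sub_cancel]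
    rw [mul_comm]
    exact div_mul_cancel₀ _ (Nat.cast_ne_zero.mpr (Nat.succ_ne_zero n))
end

section
/- Let k be a field of characteristic 0 equipped with a multiplicative nonarchimedean norm, and let δ > 0 be a real number. Let a : ℤ → k be overconvergent on the circle of radius δ. Then there exists b : ℤ → k, overconvergent on the circle of radius δ, whose derivative equals a (i.e. (n+1)b_{n+1} = aₙ for all n ∈ ℤ) if and only if a_{-1} = 0. (This is the computation of the de Rham cohomology of the one-dimensional dagger annulus Spm(k<δ⁻¹T, (δ⁻¹T)⁻¹>†) used in the proof of the homotopy invariance Proposition: an overconvergent Laurent series is a derivative exactly when its residue vanishes.) -/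
/-!
STATEMENT 4: Over a nonarchimedean normed field `k` of characteristic zero, an
overconvergent Laurent series on the circle of radius `δ` (a two-sided coefficient
sequence `a : ℤ → k` with `‖aₙ‖ρ₂ⁿ → 0` as `n → +∞` and `‖aₙ‖ρ₁ⁿ → 0` as `n → -∞`
for some `0 < ρ₁ < δ < ρ₂`) is the derivative of such an overconvergent Laurent
series if and only if its residue `a₋₁` vanishes.  The derivative of `b` is the
sequence `n ↦ (n+1) b_{n+1}`.
-/

/-- `a : ℤ → k` (encoding the Laurent series `Σ aₙ Tⁿ`) is overconvergent on the
circle of radius `δ`. -/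
def IsOvercgtOnCircle {k : Type*} [NormedField k] (δ : ℝ) (a : ℤ → k) : Prop :=
  ∃ ρ₁ ρ₂ : ℝ, 0 < ρ₁ ∧ ρ₁ < δ ∧ δ < ρ₂ ∧
    Filter.Tendsto (fun n : ℤ => ‖a n‖ * ρ₂ ^ n) Filter.atTop (nhds 0) ∧
    Filter.Tendsto (fun n : ℤ => ‖a n‖ * ρ₁ ^ n) Filter.atBot (nhds 0)

section Aux
variable {k : Type*} [NormedField k]

lemma norm_nat_le_one (hna : ∀ x y : k, ‖x + y‖ ≤ max ‖x‖ ‖y‖) :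
    ∀ n : ℕ, ‖(n : k)‖ ≤ 1 := by
  intro n
  induction n with
  | zero => simp
  | succ m ih =>
    push_cast
    refine le_trans (hna m 1) ?_
    simp [ih]

lemma exists_pow_le_norm [CharZero k] (hna : ∀ x y : k, ‖x + y‖ ≤ max ‖x‖ ‖y‖) :
    ∃ (r : ℝ) (p : ℕ), 0 < r ∧ r ≤ 1 ∧ 2 ≤ p ∧
      ∀ n : ℕ, 1 ≤ n → r ^ Nat.log p n ≤ ‖(n : k)‖ := by
  by_cases h : ∀ n : ℕ, 1 ≤ n → ‖(n : k)‖ = 1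
  · exact ⟨1, 2, one_pos, le_refl _, le_refl _, fun n hn => by simp [h n hn]⟩
  · push_neg at h
    have hS : ∃ n : ℕ, 1 ≤ n ∧ ‖(n : k)‖ < 1 := by
      obtain ⟨n, hn1, hn2⟩ := h
      exact ⟨n, hn1, lt_of_le_of_ne (norm_nat_le_one hna n) hn2⟩
    classical
    set p := Nat.find hS with hp
    obtain ⟨hp1, hplt⟩ : 1 ≤ p ∧ ‖(p : k)‖ < 1 := Nat.find_spec hS
    have hmin : ∀ s : ℕ, 1 ≤ s → s < p → ‖(s : k)‖ = 1 := by
      intro s hs1 hsp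
      have := Nat.find_min hS hsp
      push_neg at this
      exact le_antisymm (norm_nat_le_one hna s) (this hs1)
    have hp2 : 2 ≤ p := by
      rcases Nat.lt_or_ge p 2 with h2 | h2
      · interval_cases p
        · simp at hplt
      · exact h2
    have hrpos : 0 < ‖(p : k)‖ := by
      have : (p : k) ≠ 0 := Nat.cast_ne_zero.mpr (by omega)
      exact norm_pos_iff.mpr this
    refine ⟨‖(p : k)‖, p, hrpos, hplt.le, hp2, ?_⟩
    intro n
    induction n using Nat.strong_induction_on with
    | _ n IH =>
      intro hn1
      by_cases hn : ‖(n : k)‖ = 1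
      · rw [hn]; exact pow_le_one₀ hrpos.le hplt.le
      have hnlt : ‖(n : k)‖ < 1 := lt_of_le_of_ne (norm_nat_le_one hna n) hn
      -- p divides n
      have hdvd : p ∣ n := by
        by_contra hnd
        have hmod : n % p ≠ 0 := fun h0 => hnd (Nat.dvd_of_mod_eq_zero h0)
        have hmodlt : n % p < p := Nat.mod_lt n (by omega)
        have hmods : ‖((n % p : ℕ) : k)‖ = 1 := hmin _ (by omega) hmodlt
        have hEq : ((n % p : ℕ) : k) = (n : k) + (-((p * (n / p) : ℕ) : k)) := by
          have h0 : ((n % p : ℕ) : k) + ((p * (n / p) : ℕ) : k) = (n : k) := by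
            exact_mod_cast congrArg (Nat.cast : ℕ → k) (Nat.mod_add_div n p)
          rw [← h0]; ring
        have hb : ‖((p * (n / p) : ℕ) : k)‖ < 1 := by
          push_cast
          rw [norm_mul]
          calc ‖(p : k)‖ * ‖((n / p : ℕ) : k)‖ ≤ ‖(p : k)‖ * 1 :=
                mul_le_mul_of_nonneg_left (norm_nat_le_one hna _) hrpos.le
            _ < 1 := by rwa [mul_one]
        have := hna ((n : k)) (-((p * (n / p) : ℕ) : k))
        rw [← hEq, norm_neg, hmods] at this
        rcases max_cases ‖(n : k)‖ ‖((p * (n / p) : ℕ) : k)‖ with ⟨he, _⟩ | ⟨he, _⟩ <;>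
          rw [he] at this <;> linarith
      obtain ⟨q, hq⟩ := hdvd
      have hq1 : 1 ≤ q := by
        rcases Nat.eq_zero_or_pos q with h0 | h0
        · subst h0; simp at hq; omega
        · exact h0
      have hqn : q < n := by nlinarith
      have hIH := IH q hqn hq1
      have hlog : Nat.log p n = Nat.log p q + 1 := by
        rw [hq, Nat.mul_comm, Nat.log_mul_base (by omega) (by omega)]
      rw [hlog, hq]
      push_cast
      rw [norm_mul, pow_succ, mul_comm (‖(p:k)‖ ^ Nat.log p q)]
      exact mul_le_mul_of_nonneg_left hIH hrpos.le

lemma exists_K_norm [CharZero k] (hna : ∀ x y : k, ‖x + y‖ ≤ max ‖x‖ ‖y‖) :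
    ∃ K : ℕ, ∀ n : ℕ, 1 ≤ n → 1 ≤ (n : ℝ) ^ K * ‖(n : k)‖ := by
  obtain ⟨r, p, hr0, hr1, hp2, hlow⟩ := exists_pow_le_norm hna
  obtain ⟨K, hK⟩ := pow_unbounded_of_one_lt (r⁻¹) (y := (2:ℝ)) one_lt_two
  refine ⟨K, fun n hn => ?_⟩
  set L := Nat.log p n with hL
  have h1 : ((p : ℝ) ^ L) ^ K ≤ (n : ℝ) ^ K := by
    apply pow_le_pow_left₀ (by positivity)
    exact_mod_cast Nat.pow_log_le_self p (by omega)
  have h2 : (r⁻¹) ^ L ≤ ((p : ℝ) ^ L) ^ K := by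
    rw [← pow_mul, Nat.mul_comm, pow_mul]
    apply pow_le_pow_left₀ (by positivity)
    calc r⁻¹ ≤ (2:ℝ) ^ K := hK.le
      _ ≤ (p : ℝ) ^ K := by
          apply pow_le_pow_left₀ (by norm_num)
          exact_mod_cast hp2
  have h3 : (1:ℝ) = (r⁻¹) ^ L * r ^ L := by
    rw [← mul_pow, inv_mul_cancel₀ hr0.ne', one_pow]
  calc (1:ℝ) = (r⁻¹) ^ L * r ^ L := h3
    _ ≤ (n : ℝ) ^ K * ‖(n : k)‖ := by
        apply mul_le_mul (le_trans h2 h1) (hlow n hn) (by positivity) (by positivity)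

end Aux

open Filter

theorem annulus_laurent_is_derivative_iff_residue_zero
    (k : Type*) [NormedField k] [CharZero k]
    (hna : ∀ x y : k, ‖x + y‖ ≤ max ‖x‖ ‖y‖)
    (δ : ℝ) (hδ : 0 < δ)
    (a : ℤ → k) (ha : IsOvercgtOnCircle δ a) :
    (∃ b : ℤ → k, IsOvercgtOnCircle δ b ∧
        ∀ n : ℤ, ((n + 1 : ℤ) : k) * b (n + 1) = a n) ↔ a (-1) = 0 := by
  constructor
  · rintro ⟨b, _, hb⟩
    have := hb (-1)
    simpa using this.symm
  · intro hres
    obtain ⟨ρ₁, ρ₂, hρ₁, hρ₁δ, hδρ₂, hT, hB⟩ := ha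
    obtain ⟨K, hK⟩ := exists_K_norm (k := k) hna
    classical
    set b : ℤ → k := fun n => if n = 0 then 0 else a (n - 1) / (n : k) with hbdef
    have hρ₂ : (0:ℝ) < ρ₂ := lt_trans hδ hδρ₂
    set ρ₁' : ℝ := (ρ₁ + δ)/2 with hρ₁'def
    set ρ₂' : ℝ := (δ + ρ₂)/2 with hρ₂'def
    have hρ₁'pos : 0 < ρ₁' := by rw [hρ₁'def]; linarith
    have hρ₂'pos : 0 < ρ₂' := by rw [hρ₂'def]; linarith
    have hρ₁ρ₁' : ρ₁ < ρ₁' := by rw [hρ₁'def]; linarith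
    have hρ₂'ρ₂ : ρ₂' < ρ₂ := by rw [hρ₂'def]; linarith
    -- norm bound on b
    have hKi : ∀ m : ℤ, m ≠ 0 → ‖b m‖ ≤ ‖a (m-1)‖ * (m.natAbs : ℝ) ^ K := by
      intro m hm
      have hcast : ‖(m:k)‖ = ‖((m.natAbs : ℕ) : k)‖ := by
        rcases Int.natAbs_eq m with h | h
        · conv_lhs => rw [h]
          rw [Int.cast_natCast]
        · conv_lhs => rw [h]
          rw [Int.cast_neg, Int.cast_natCast, norm_neg]
      have hpos : (0:ℝ) < ‖(m:k)‖ :=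
        norm_pos_iff.mpr (Int.cast_ne_zero.mpr hm)
      have hK' : (1:ℝ) ≤ (m.natAbs : ℝ) ^ K * ‖(m:k)‖ := by
        rw [hcast]; exact hK m.natAbs (by omega)
      have hdiv : (1:ℝ) / ‖(m:k)‖ ≤ (m.natAbs : ℝ) ^ K :=
        (div_le_iff₀ hpos).mpr hK'
      have hbm : b m = a (m-1) / (m : k) := by simp [hbdef, hm]
      rw [hbm, norm_div, div_eq_mul_one_div]
      exact mul_le_mul_of_nonneg_left hdiv (norm_nonneg _)
    have hnatAbsTop : Tendsto Int.natAbs atTop atTop :=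
      tendsto_atTop.2 fun c => eventually_atTop.2 ⟨(c:ℤ), fun n hn => by omega⟩
    have hnatAbsBot : Tendsto Int.natAbs atBot atTop :=
      tendsto_atTop.2 fun c => eventually_atBot.2 ⟨-(c:ℤ), fun n hn => by omega⟩
    refine ⟨b, ⟨ρ₁', ρ₂', hρ₁'pos, by rw [hρ₁'def]; linarith, by rw [hρ₂'def]; linarith, ?_, ?_⟩, ?_⟩
    · -- atTop
      set s : ℝ := ρ₂'/ρ₂ with hsdef
      have hs0 : 0 < s := by positivity
      have hs1 : s < 1 := (div_lt_one hρ₂).mpr hρ₂'ρ₂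
      have hg : Tendsto (fun m : ℕ => (m:ℝ)^K * s ^ m) atTop (nhds 0) :=
        tendsto_pow_const_mul_const_pow_of_lt_one K hs0.le hs1
      have hlim : Tendsto (fun n : ℤ => ρ₂ * ((n.natAbs : ℝ)^K * s ^ n.natAbs)) atTop (nhds 0) := by
        simpa using (hg.comp hnatAbsTop).const_mul ρ₂
      obtain ⟨N, hN⟩ := eventually_atTop.1 (hT.eventually (gt_mem_nhds one_pos))
      have key : ∀ n : ℤ, 1 ≤ n → ‖a (n-1)‖ * ρ₂^(n-1) ≤ 1 →
          ‖b n‖ * ρ₂'^n ≤ ρ₂ * ((n.natAbs : ℝ)^K * s ^ n.natAbs) := by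
        intro n hn hA
        have hsn : s ^ n = s ^ n.natAbs := by
          conv_lhs => rw [show n = ((n.natAbs : ℕ) : ℤ) from by omega]
          rw [zpow_natCast]
        have hz : ρ₂' ^ n = ρ₂ ^ (n-1) * ρ₂ * s ^ n.natAbs := by
          rw [← hsn]
          have h1 : ρ₂' = ρ₂ * s := by rw [hsdef]; field_simp
          rw [h1, mul_zpow, zpow_sub_one₀ (ne_of_gt hρ₂)]
          field_simp
        calc ‖b n‖ * ρ₂'^n ≤ (‖a (n-1)‖ * (n.natAbs : ℝ)^K) * ρ₂'^n :=
              mul_le_mul_of_nonneg_right (hKi n (by omega)) (by positivity)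
          _ = (‖a (n-1)‖ * ρ₂^(n-1)) * (ρ₂ * ((n.natAbs : ℝ)^K * s ^ n.natAbs)) := by
              rw [hz]; ring
          _ ≤ 1 * (ρ₂ * ((n.natAbs : ℝ)^K * s ^ n.natAbs)) :=
              mul_le_mul_of_nonneg_right hA (by positivity)
          _ = ρ₂ * ((n.natAbs : ℝ)^K * s ^ n.natAbs) := one_mul _
      refine squeeze_zero' (Eventually.of_forall fun n => by positivity) ?_ hlim
      exact eventually_atTop.2 ⟨max (N+1) 1, fun n hn =>
        key n (le_trans (le_max_right _ _) hn) (hN (n-1) (by omega)).le⟩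
    · -- atBot
      set u : ℝ := ρ₁/ρ₁' with hudef
      have hu0 : 0 < u := by positivity
      have hu1 : u < 1 := (div_lt_one hρ₁'pos).mpr hρ₁ρ₁'
      have hg : Tendsto (fun m : ℕ => (m:ℝ)^K * u ^ m) atTop (nhds 0) :=
        tendsto_pow_const_mul_const_pow_of_lt_one K hu0.le hu1
      have hlim : Tendsto (fun n : ℤ => ρ₁ * ((n.natAbs : ℝ)^K * u ^ n.natAbs)) atBot (nhds 0) := by
        simpa using (hg.comp hnatAbsBot).const_mul ρ₁
      obtain ⟨M, hM⟩ := eventually_atBot.1 (hB.eventually (gt_mem_nhds one_pos))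
      have key : ∀ n : ℤ, n ≤ -1 → ‖a (n-1)‖ * ρ₁^(n-1) ≤ 1 →
          ‖b n‖ * ρ₁'^n ≤ ρ₁ * ((n.natAbs : ℝ)^K * u ^ n.natAbs) := by
        intro n hn hA
        have hsn : (ρ₁'/ρ₁) ^ n = u ^ n.natAbs := by
          have h1 : (ρ₁'/ρ₁ : ℝ) = u⁻¹ := by rw [hudef]; field_simp
          rw [h1, inv_zpow, ← zpow_neg,
            show -n = ((n.natAbs : ℕ) : ℤ) by omega, zpow_natCast]
        have hz : ρ₁' ^ n = ρ₁ ^ (n-1) * ρ₁ * u ^ n.natAbs := by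
          rw [← hsn]
          have h1 : ρ₁' = ρ₁ * (ρ₁'/ρ₁) := by field_simp
          rw [h1, mul_zpow, zpow_sub_one₀ (ne_of_gt hρ₁)]
          field_simp
        calc ‖b n‖ * ρ₁'^n ≤ (‖a (n-1)‖ * (n.natAbs : ℝ)^K) * ρ₁'^n :=
              mul_le_mul_of_nonneg_right (hKi n (by omega)) (by positivity)
          _ = (‖a (n-1)‖ * ρ₁^(n-1)) * (ρ₁ * ((n.natAbs : ℝ)^K * u ^ n.natAbs)) := by
              rw [hz]; ring
          _ ≤ 1 * (ρ₁ * ((n.natAbs : ℝ)^K * u ^ n.natAbs)) :=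
              mul_le_mul_of_nonneg_right hA (by positivity)
          _ = ρ₁ * ((n.natAbs : ℝ)^K * u ^ n.natAbs) := one_mul _
      refine squeeze_zero' (Eventually.of_forall fun n => by positivity) ?_ hlim
      exact eventually_atBot.2 ⟨min (M+1) (-1), fun n hn =>
        key n (le_trans hn (min_le_right _ _)) (hM (n-1) (by omega)).le⟩
    · -- derivative
      intro n
      by_cases hn : n = -1
      · subst hn; simpa using hres.symm
      · have hne : (n + 1 : ℤ) ≠ 0 := by omega
        have hb1 : b (n+1) = a n / ((n+1 : ℤ) : k) := by
          simp [hbdef, hne]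
        rw [hb1, mul_div_cancel₀]
        exact Int.cast_ne_zero.mpr hne
end

section
/- Let k be a field of characteristic 0 equipped with a multiplicative nonarchimedean norm, and let δ > 0 be a real number. Consider the k-vector space A of sequences a : ℤ → k that are overconvergent on the circle of radius δ, and its subspace D consisting of the derivatives of elements of A. Then the quotient A / D is a one-dimensional k-vector space, spanned by the class of the sequence e with e_{-1} = 1 and eₙ = 0 for n ≠ -1 (i.e. the class of the Laurent series T⁻¹, equivalently of dT/T). (The first de Rham cohomology of the one-dimensional dagger annulus at radius δ is one-dimensional.) -/
/-!
STATEMENT 5: Over a nonarchimedean normed field `k` of characteristic zero, the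
quotient `A / D` of the space `A` of Laurent series overconvergent on the circle of
radius `δ` by the subspace `D` of derivatives of elements of `A` is one dimensional,
spanned by the class of `T⁻¹` (the sequence `e` with `e₋₁ = 1` and `eₙ = 0`
otherwise).  This is stated as: (i) `e ∈ A`; (ii) the class of `e` is nonzero, i.e.
`e` is not the derivative of any element of `A`; (iii) the class of `e` spans, i.e.
every `a ∈ A` differs from a scalar multiple of `e` by the derivative of an element
of `A`.
-/

open Filter

section NonarchAux
variable {k : Type*} [NormedField k]

private lemma nat_norm_le_one' (hna : ∀ x y : k, ‖x + y‖ ≤ max ‖x‖ ‖y‖) (n : ℕ) :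
    ‖(n : k)‖ ≤ 1 := by
  induction n with
  | zero => simp
  | succ n ih =>
    have h : ((n + 1 : ℕ) : k) = (n : k) + 1 := by push_cast; ring
    rw [h]
    refine (hna _ _).trans ?_
    simp [ih]

private lemma int_norm_le_one' (hna : ∀ x y : k, ‖x + y‖ ≤ max ‖x‖ ‖y‖) (u : ℤ) :
    ‖(u : k)‖ ≤ 1 := by
  rcases Int.natAbs_eq u with h | h
  · rw [h, Int.cast_natCast]; exact nat_norm_le_one' hna _
  · rw [h, Int.cast_neg, Int.cast_natCast, norm_neg]; exact nat_norm_le_one' hna _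

private lemma exists_nat_norm_bound' [CharZero k]
    (hna : ∀ x y : k, ‖x + y‖ ≤ max ‖x‖ ‖y‖) :
    ∃ m : ℕ, ∀ n : ℕ, 0 < n → ((n : ℝ)⁻¹) ^ m ≤ ‖(n : k)‖ := by
  by_cases hP : ∀ p : ℕ, p.Prime → 1 ≤ ‖(p : k)‖
  · refine ⟨0, fun n hn => ?_⟩
    simp only [pow_zero]
    revert hn
    induction n using Nat.recOnMul with
    | zero => intro h; simp at h
    | one => intro _; simp
    | prime p hp => intro _; exact hP p hp
    | mul a b ha hb =>
        intro hab
        obtain ⟨ha0, hb0⟩ : 0 < a ∧ 0 < b :=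
          ⟨Nat.pos_of_ne_zero fun h => by simp [h] at hab,
           Nat.pos_of_ne_zero fun h => by simp [h] at hab⟩
        have ha' := ha ha0
        have hb' := hb hb0
        rw [Nat.cast_mul, norm_mul]
        nlinarith [norm_nonneg ((a : k)), norm_nonneg ((b : k))]
  · push_neg at hP
    obtain ⟨p, hp, hplt⟩ := hP
    have hp2 : 2 ≤ p := hp.two_le
    have hppos : (0 : ℝ) < ‖(p : k)‖ := by
      rw [norm_pos_iff]
      exact_mod_cast hp.ne_zero
    obtain ⟨m, hm⟩ := exists_pow_lt_of_lt_one hppos (by norm_num : (1:ℝ)/2 < 1)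
    have hq1 : ∀ q : ℕ, q.Prime → q ≠ p → 1 ≤ ‖(q : k)‖ := by
      intro q hq hqp
      by_contra hcon
      push_neg at hcon
      have hcop : Nat.Coprime p q := (Nat.coprime_primes hp hq).mpr (Ne.symm hqp)
      have hb := Int.gcd_eq_gcd_ab (p : ℤ) (q : ℤ)
      have hg : Int.gcd (p : ℤ) (q : ℤ) = 1 := by
        rw [Int.gcd_natCast_natCast]; exact hcop
      rw [hg] at hb
      have hk : (1 : k)
          = (p : k) * ((Int.gcdA p q : ℤ) : k) + (q : k) * ((Int.gcdB p q : ℤ) : k) := by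
        exact_mod_cast congrArg (fun z : ℤ => (z : k)) hb
      have h2 := hna ((p : k) * ((Int.gcdA p q : ℤ) : k)) ((q : k) * ((Int.gcdB p q : ℤ) : k))
      rw [← hk] at h2
      have hA := int_norm_le_one' hna (Int.gcdA p q)
      have hB := int_norm_le_one' hna (Int.gcdB p q)
      rw [norm_mul, norm_mul] at h2
      have hq0 : (0:ℝ) ≤ ‖(q:k)‖ := norm_nonneg _
      have e1 : ‖(p:k)‖ * ‖((Int.gcdA p q : ℤ):k)‖ ≤ ‖(p:k)‖ := by nlinarith
      have e2 : ‖(q:k)‖ * ‖((Int.gcdB p q : ℤ):k)‖ ≤ ‖(q:k)‖ := by nlinarith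
      have hlt : ‖(1:k)‖ < 1 :=
        lt_of_le_of_lt h2 (max_lt (lt_of_le_of_lt e1 hplt) (lt_of_le_of_lt e2 hcon))
      rw [norm_one] at hlt
      exact absurd hlt (lt_irrefl _)
    have hcomp : ∀ s : ℕ, ¬ p ∣ s → 1 ≤ ‖(s : k)‖ := by
      intro s
      induction s using Nat.recOnMul with
      | zero => intro h; exact absurd (dvd_zero p) h
      | one => intro _; simp
      | prime q hq => intro hnd
                      exact hq1 q hq (fun h => hnd (h ▸ dvd_refl p))
      | mul a b ha hb =>
          intro h
          rw [Nat.cast_mul, norm_mul]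
          have ha' := ha (fun d => h (d.mul_right b))
          have hb' := hb (fun d => h (d.mul_left a))
          nlinarith
    refine ⟨m, fun n hn => ?_⟩
    set v := n.factorization p with hv
    have hdvd : p ^ v ∣ n := Nat.ordProj_dvd n p
    have hmnd : ¬ p ∣ n / p ^ v := Nat.not_dvd_ordCompl hp hn.ne'
    have hsplit : p ^ v * (n / p ^ v) = n := Nat.ordProj_mul_ordCompl_eq_self n p
    have h1 : ‖(n : k)‖ = ‖(p : k)‖ ^ v * ‖((n / p ^ v : ℕ) : k)‖ := by
      conv_lhs => rw [← hsplit]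
      push_cast
      rw [norm_mul, norm_pow]
    have h2 : ‖(p : k)‖ ^ v ≤ ‖(n : k)‖ := by
      rw [h1]
      exact le_mul_of_one_le_right (pow_nonneg hppos.le v) (hcomp _ hmnd)
    have h2v : 2 ^ v ≤ n := le_trans (Nat.pow_le_pow_left hp2 v) (Nat.le_of_dvd hn hdvd)
    have e1 : ((n : ℝ)⁻¹) ^ m ≤ (((2:ℝ) ^ v)⁻¹) ^ m := by
      apply pow_le_pow_left₀ (inv_nonneg.2 (Nat.cast_nonneg n))
      apply inv_anti₀ (by positivity)
      exact_mod_cast h2v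
    have e2 : (((2:ℝ) ^ v)⁻¹) ^ m = ((1/2 : ℝ) ^ m) ^ v := by
      rw [← inv_pow, ← pow_mul, one_div, ← pow_mul, Nat.mul_comm]
    have e3 : ((1/2 : ℝ) ^ m) ^ v ≤ ‖(p : k)‖ ^ v :=
      pow_le_pow_left₀ (by positivity) hm.le v
    calc ((n : ℝ)⁻¹) ^ m ≤ ((1/2 : ℝ) ^ m) ^ v := by rw [← e2]; exact e1
      _ ≤ ‖(p : k)‖ ^ v := e3
      _ ≤ ‖(n : k)‖ := h2

end NonarchAux

private lemma tendsto_toNat_atTop' : Tendsto Int.toNat atTop atTop := by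
  apply Filter.tendsto_atTop.2
  intro b
  filter_upwards [Filter.eventually_ge_atTop (b : ℤ)] with n hn
  omega

private lemma tendsto_polyGeom' (m : ℕ) {r : ℝ} (h0 : 0 < r) (h1 : r < 1) :
    Tendsto (fun n : ℤ => (n.natAbs : ℝ) ^ m * r ^ n) atTop (nhds 0) := by
  have key : Tendsto (fun j : ℕ => (j : ℝ) ^ m * r ^ j) atTop (nhds 0) :=
    (summable_pow_mul_geometric_of_norm_lt_one (R := ℝ) m
      (by rwa [Real.norm_eq_abs, abs_of_nonneg h0.le])).tendsto_atTop_zero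
  refine Filter.Tendsto.congr' ?_ (key.comp tendsto_toNat_atTop')
  filter_upwards [Filter.eventually_ge_atTop (0 : ℤ)] with n hn
  have h : n = ((n.toNat : ℕ) : ℤ) := (Int.toNat_of_nonneg hn).symm
  simp only [Function.comp]
  conv_rhs => rw [h, Int.natAbs_natCast, zpow_natCast]

private lemma tendsto_polyGeom_bot' (m : ℕ) {r : ℝ} (h1 : 1 < r) :
    Tendsto (fun n : ℤ => (n.natAbs : ℝ) ^ m * r ^ n) atBot (nhds 0) := by
  have h0 : 0 < r := lt_trans one_pos h1
  have key := tendsto_polyGeom' m (inv_pos.2 h0) (inv_lt_one_of_one_lt₀ h1)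
  refine Filter.Tendsto.congr' ?_ (key.comp tendsto_neg_atBot_atTop)
  refine Filter.Eventually.of_forall fun n => ?_
  simp only [Function.comp]
  rw [Int.natAbs_neg, zpow_neg, inv_zpow, inv_inv]

private lemma zpow_split' {x y : ℝ} (hx : x ≠ 0) (n : ℤ) :
    y ^ n = x ^ (n - 1) * ((y / x) ^ n * x) := by
  have hxn : x ^ n ≠ 0 := zpow_ne_zero n hx
  rw [div_zpow, zpow_sub_one₀ hx]
  field_simp

theorem annulus_first_deRham_cohomology_one_dimensional
    (k : Type*) [NormedField k] [CharZero k]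
    (hna : ∀ x y : k, ‖x + y‖ ≤ max ‖x‖ ‖y‖)
    (δ : ℝ) (hδ : 0 < δ)
    (e : ℤ → k) (he : ∀ n : ℤ, e n = if n = -1 then 1 else 0) :
    IsOvercgtOnCircle δ e ∧
    (¬ ∃ b : ℤ → k, IsOvercgtOnCircle δ b ∧
        ∀ n : ℤ, ((n + 1 : ℤ) : k) * b (n + 1) = e n) ∧
    (∀ a : ℤ → k, IsOvercgtOnCircle δ a →
      ∃ (c : k) (b : ℤ → k), IsOvercgtOnCircle δ b ∧
        ∀ n : ℤ, a n - c * e n = ((n + 1 : ℤ) : k) * b (n + 1)) := by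
  obtain ⟨m, hm⟩ := exists_nat_norm_bound' hna
  have hmI : ∀ u : ℤ, u ≠ 0 → ‖(u : k)‖⁻¹ ≤ (u.natAbs : ℝ) ^ m := by
    intro u hu
    have habs : ‖(u : k)‖ = ‖((u.natAbs : ℕ) : k)‖ := by
      rcases Int.natAbs_eq u with h | h
      · conv_lhs => rw [h]
        rw [Int.cast_natCast]
      · conv_lhs => rw [h]
        rw [Int.cast_neg, Int.cast_natCast, norm_neg]
    have h1 : ((u.natAbs : ℝ)⁻¹) ^ m ≤ ‖(u : k)‖ := by
      rw [habs]
      exact hm u.natAbs (Int.natAbs_pos.mpr hu)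
    have hNpos : (0:ℝ) < (u.natAbs : ℝ) := by
      exact_mod_cast Int.natAbs_pos.mpr hu
    have hpos : (0:ℝ) < ((u.natAbs : ℝ)⁻¹) ^ m := by positivity
    calc ‖(u:k)‖⁻¹ ≤ (((u.natAbs : ℝ)⁻¹) ^ m)⁻¹ := inv_anti₀ hpos h1
      _ = (u.natAbs : ℝ) ^ m := by rw [← inv_pow, inv_inv]
  refine ⟨?_, ?_, ?_⟩
  · -- (i) e is overconvergent
    refine ⟨δ/2, δ+1, by positivity, by linarith, by linarith, ?_, ?_⟩
    · refine Filter.Tendsto.congr' ?_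
        (tendsto_const_nhds : Filter.Tendsto (fun _ : ℤ => (0:ℝ)) Filter.atTop (nhds 0))
      filter_upwards [Filter.eventually_ge_atTop (0:ℤ)] with n hn
      rw [he n, if_neg (by omega : ¬ n = -1), norm_zero, zero_mul]
    · refine Filter.Tendsto.congr' ?_
        (tendsto_const_nhds : Filter.Tendsto (fun _ : ℤ => (0:ℝ)) Filter.atBot (nhds 0))
      filter_upwards [Filter.eventually_le_atBot (-2:ℤ)] with n hn
      rw [he n, if_neg (by omega : ¬ n = -1), norm_zero, zero_mul]
  · -- (ii) e is not a derivative
    rintro ⟨b, _, heq⟩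
    have h := heq (-1)
    rw [he (-1), if_pos rfl] at h
    norm_num at h
  · -- (iii) spanning
    intro a ha
    obtain ⟨ρ₁, ρ₂, hρ₁, hρ₁δ, hδρ₂, haT, haB⟩ := ha
    have hρ₂pos : 0 < ρ₂ := lt_trans hδ hδρ₂
    set ρ₂' := (δ + ρ₂)/2 with hρ₂'def
    set ρ₁' := (ρ₁ + δ)/2 with hρ₁'def
    have hρ₂'1 : δ < ρ₂' := by rw [hρ₂'def]; linarith
    have hρ₂'2 : ρ₂' < ρ₂ := by rw [hρ₂'def]; linarith
    have hρ₂'pos : 0 < ρ₂' := lt_trans hδ hρ₂'1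
    have hρ₁'1 : ρ₁ < ρ₁' := by rw [hρ₁'def]; linarith
    have hρ₁'2 : ρ₁' < δ := by rw [hρ₁'def]; linarith
    have hρ₁'pos : 0 < ρ₁' := lt_trans hρ₁ hρ₁'1
    set b : ℤ → k := fun n => if n = 0 then 0 else a (n - 1) * ((n : k))⁻¹ with hbdef
    have hbnorm : ∀ n : ℤ, n ≠ 0 → ‖b n‖ ≤ ‖a (n-1)‖ * (n.natAbs : ℝ) ^ m := by
      intro n hn
      rw [hbdef]
      simp only [if_neg hn]
      rw [norm_mul, norm_inv]
      exact mul_le_mul_of_nonneg_left (hmI n hn) (norm_nonneg _)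
    refine ⟨a (-1), b, ⟨ρ₁', ρ₂', hρ₁'pos, hρ₁'2, hρ₂'1, ?_, ?_⟩, ?_⟩
    · -- atTop
      have hs : ρ₂'/ρ₂ < 1 := (div_lt_one hρ₂pos).2 hρ₂'2
      have hs0 : 0 < ρ₂'/ρ₂ := div_pos hρ₂'pos hρ₂pos
      have hA : Tendsto (fun n : ℤ => ‖a (n - 1)‖ * ρ₂ ^ (n - 1)) atTop (nhds 0) := by
        have hshift : Tendsto (fun n : ℤ => n - 1) atTop atTop := by
          simpa [sub_eq_add_neg] using
            Filter.tendsto_atTop_add_const_right atTop (-1 : ℤ) tendsto_id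
        exact haT.comp hshift
      have hB : Tendsto (fun n : ℤ => (n.natAbs : ℝ) ^ m * (ρ₂'/ρ₂) ^ n * ρ₂)
          atTop (nhds 0) := by
        simpa using (tendsto_polyGeom' m hs0 hs).mul_const ρ₂
      have hAB : Tendsto (fun n : ℤ =>
          (‖a (n - 1)‖ * ρ₂ ^ (n - 1)) * ((n.natAbs : ℝ) ^ m * (ρ₂'/ρ₂) ^ n * ρ₂))
          atTop (nhds 0) := by
        simpa using hA.mul hB
      refine squeeze_zero' ?_ ?_ hAB
      · exact Filter.Eventually.of_forall fun n =>
          mul_nonneg (norm_nonneg _) (zpow_pos hρ₂'pos n).le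
      · filter_upwards [Filter.eventually_ge_atTop (1:ℤ)] with n hn
        have hn0 : n ≠ 0 := by omega
        have h2n : (ρ₂:ℝ) ^ n ≠ 0 := zpow_ne_zero n (ne_of_gt hρ₂pos)
        have hzz : (ρ₂' : ℝ) ^ n = ρ₂ ^ (n - 1) * ((ρ₂'/ρ₂) ^ n * ρ₂) :=
          zpow_split' (ne_of_gt hρ₂pos) n
        calc ‖b n‖ * ρ₂' ^ n ≤ (‖a (n-1)‖ * (n.natAbs : ℝ) ^ m) * ρ₂' ^ n :=
              mul_le_mul_of_nonneg_right (hbnorm n hn0) (zpow_pos hρ₂'pos n).le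
          _ = (‖a (n - 1)‖ * ρ₂ ^ (n - 1)) * ((n.natAbs : ℝ) ^ m * (ρ₂'/ρ₂) ^ n * ρ₂) := by
              rw [hzz]; ring
    · -- atBot
      have hs : 1 < ρ₁'/ρ₁ := (one_lt_div hρ₁).2 hρ₁'1
      have hA : Tendsto (fun n : ℤ => ‖a (n - 1)‖ * ρ₁ ^ (n - 1)) atBot (nhds 0) := by
        have hshift : Tendsto (fun n : ℤ => n - 1) atBot atBot := by
          simpa [sub_eq_add_neg] using
            Filter.tendsto_atBot_add_const_right atBot (-1 : ℤ) tendsto_id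
        exact haB.comp hshift
      have hB : Tendsto (fun n : ℤ => (n.natAbs : ℝ) ^ m * (ρ₁'/ρ₁) ^ n * ρ₁)
          atBot (nhds 0) := by
        simpa using (tendsto_polyGeom_bot' m hs).mul_const ρ₁
      have hAB : Tendsto (fun n : ℤ =>
          (‖a (n - 1)‖ * ρ₁ ^ (n - 1)) * ((n.natAbs : ℝ) ^ m * (ρ₁'/ρ₁) ^ n * ρ₁))
          atBot (nhds 0) := by
        simpa using hA.mul hB
      refine squeeze_zero' ?_ ?_ hAB
      · exact Filter.Eventually.of_forall fun n =>
          mul_nonneg (norm_nonneg _) (zpow_pos hρ₁'pos n).le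
      · filter_upwards [Filter.eventually_le_atBot (-1:ℤ)] with n hn
        have hn0 : n ≠ 0 := by omega
        have h1n : (ρ₁:ℝ) ^ n ≠ 0 := zpow_ne_zero n (ne_of_gt hρ₁)
        have hzz : (ρ₁' : ℝ) ^ n = ρ₁ ^ (n - 1) * ((ρ₁'/ρ₁) ^ n * ρ₁) :=
          zpow_split' (ne_of_gt hρ₁) n
        calc ‖b n‖ * ρ₁' ^ n ≤ (‖a (n-1)‖ * (n.natAbs : ℝ) ^ m) * ρ₁' ^ n :=
              mul_le_mul_of_nonneg_right (hbnorm n hn0) (zpow_pos hρ₁'pos n).le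
          _ = (‖a (n - 1)‖ * ρ₁ ^ (n - 1)) * ((n.natAbs : ℝ) ^ m * (ρ₁'/ρ₁) ^ n * ρ₁) := by
              rw [hzz]; ring
    · -- the identity
      intro n
      by_cases hn : n = -1
      · subst hn
        rw [he (-1), if_pos rfl]
        simp [hbdef]
      · rw [he n, if_neg hn, mul_zero, sub_zero]
        have hn1 : n + 1 ≠ 0 := by omega
        have hc : ((n + 1 : ℤ) : k) ≠ 0 := Int.cast_ne_zero.mpr hn1
        rw [hbdef]
        simp only [if_neg hn1, add_sub_cancel_right]
        rw [mul_comm (a n), ← mul_assoc, mul_inv_cancel₀ hc, one_mul]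
end

section
/- Let 𝕜 be a complete nontrivially normed field, let E and F be Hausdorff topological vector spaces over 𝕜 whose topologies are completely metrizable (F-spaces, e.g. Fréchet spaces), and let T : E → F be a continuous 𝕜-linear map such that the quotient F / range(T) is a finite-dimensional 𝕜-vector space. Then range(T) is a closed subspace of F. (This is the functional-analytic step in the proof that all differentials d^i : Ωⁱ_X(X) → Ω^{i+1}_X(X) on a smooth rigid Stein space have closed image: the image of the continuous map of Fréchet spaces d^{i-1} : Ω^{i-1}_X(X) → ker(d^i) has finite codimension by the finiteness theorem, hence is closed.) -/
/-!
STATEMENT 9: Let `𝕜` be a complete nontrivially normed field and let `E`, `F` be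
Hausdorff topological vector spaces over `𝕜` whose topologies are completely
metrizable (F-spaces).  If `T : E → F` is a continuous `𝕜`-linear map whose range
has finite codimension (i.e. `F ⧸ range T` is a finite-dimensional `𝕜`-vector
space), then `range T` is closed in `F`.
-/

open Filter Set Topology Function Uniformity Pointwise

/-- Auxiliary: preimage of a Gδ set under a continuous map is Gδ. -/
theorem IsGδ.preimage' {X Y : Type*} [TopologicalSpace X] [TopologicalSpace Y]
    {s : Set Y} (hs : IsGδ s) {f : X → Y} (hf : Continuous f) : IsGδ (f ⁻¹' s) := by
  obtain ⟨T, hTo, hTc, rfl⟩ := hs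
  rw [Set.preimage_sInter]
  exact IsGδ.biInter hTc fun t ht => ((hTo t ht).preimage hf).isGδ

/-- A dense set which is the image of a complete metric space under an embedding is Gδ. -/
theorem isGδ_range_of_dense_aux {T X : Type*} [MetricSpace T] [CompleteSpace T] [MetricSpace X]
    {f : T → X} (hf : Topology.IsEmbedding f) (hd : Dense (Set.range f)) :
    IsGδ (Set.range f) := by
  set U : ℕ → Set X := fun n =>
    {x : X | ∃ ε > (0:ℝ), ∀ a b : T, f a ∈ Metric.ball x ε → f b ∈ Metric.ball x ε →
      dist a b < 1 / (n + 1)} with hU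
  have hUopen : ∀ n, IsOpen (U n) := by
    intro n
    rw [Metric.isOpen_iff]
    rintro x ⟨ε, hε, hx⟩
    refine ⟨ε / 2, by positivity, fun x' hx' => ⟨ε / 2, by positivity, fun a b ha hb => ?_⟩⟩
    have hsub : Metric.ball x' (ε / 2) ⊆ Metric.ball x ε := fun y hy => by
      rw [Metric.mem_ball] at hy hx' ⊢
      calc dist y x ≤ dist y x' + dist x' x := dist_triangle _ _ _
        _ < ε / 2 + ε / 2 := by linarith
        _ = ε := by ring
    exact hx a b (hsub ha) (hsub hb)
  have hrsub : ∀ n, Set.range f ⊆ U n := by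
    rintro n _ ⟨a₀, rfl⟩
    have hball : IsOpen (Metric.ball a₀ (1 / (3 * ((n:ℝ) + 1)))) := Metric.isOpen_ball
    rw [hf.isInducing.isOpen_iff] at hball
    obtain ⟨V, hVopen, hVeq⟩ := hball
    have ha₀V : f a₀ ∈ V := by
      have : a₀ ∈ f ⁻¹' V := by
        rw [hVeq]; exact Metric.mem_ball_self (by positivity)
      exact this
    obtain ⟨ε, hε, hsub⟩ := Metric.isOpen_iff.1 hVopen _ ha₀V
    refine ⟨ε, hε, fun a b ha hb => ?_⟩
    have ha' : a ∈ Metric.ball a₀ (1 / (3 * ((n:ℝ) + 1))) := by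
      rw [← hVeq]; exact hsub ha
    have hb' : b ∈ Metric.ball a₀ (1 / (3 * ((n:ℝ) + 1))) := by
      rw [← hVeq]; exact hsub hb
    rw [Metric.mem_ball] at ha' hb'
    have h3 : (0:ℝ) < (n:ℝ) + 1 := by positivity
    calc dist a b ≤ dist a a₀ + dist a₀ b := dist_triangle _ _ _
      _ = dist a a₀ + dist b a₀ := by rw [dist_comm a₀ b]
      _ < 1 / (3 * ((n:ℝ) + 1)) + 1 / (3 * ((n:ℝ) + 1)) := by linarith
      _ < 1 / ((n:ℝ) + 1) := by
          rw [← add_div]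
          rw [div_lt_div_iff₀ (by positivity) h3]
          ring_nf
          nlinarith
  have hinter : ⋂ n, U n ⊆ Set.range f := by
    intro x hx
    simp only [Set.mem_iInter] at hx
    choose ε hεpos hεprop using hx
    -- build a decreasing gauge
    have hrec : ∀ n, ∃ δ : ℝ, 0 < δ ∧ δ ≤ ε n ∧ δ ≤ 1 / (n + 1) := fun n =>
      ⟨min (ε n) (1 / (n + 1)), lt_min (hεpos n) (by positivity), min_le_left _ _,
        min_le_right _ _⟩
    choose δ0 hδ0pos hδ0ε hδ0le using hrec
    let δ : ℕ → ℝ := fun n => Nat.rec (δ0 0) (fun n d => min (δ0 (n + 1)) d) n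
    have hδ0 : δ 0 = δ0 0 := rfl
    have hδsucc : ∀ n, δ (n + 1) = min (δ0 (n + 1)) (δ n) := fun n => rfl
    have hδpos : ∀ n, 0 < δ n := by
      intro n; induction n with
      | zero => exact hδ0pos 0
      | succ n ih => rw [hδsucc]; exact lt_min (hδ0pos _) ih
    have hδδ0 : ∀ n, δ n ≤ δ0 n := by
      intro n; cases n with
      | zero => exact le_refl _
      | succ n => rw [hδsucc]; exact min_le_left _ _
    have hδanti : Antitone δ := antitone_nat_of_succ_le fun n => by
      rw [hδsucc]; exact min_le_right _ _
    -- choose approximating points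
    have hchoice : ∀ n : ℕ, ∃ a : T, f a ∈ Metric.ball x (δ n) := by
      intro n
      have := hd.exists_mem_open Metric.isOpen_ball
        ⟨x, Metric.mem_ball_self (hδpos n)⟩
      obtain ⟨y, ⟨a, rfl⟩, hy⟩ := this
      exact ⟨a, hy⟩
    choose a ha using hchoice
    have hcauchy : CauchySeq a := by
      rw [Metric.cauchySeq_iff]
      intro e he
      obtain ⟨N, hN⟩ := exists_nat_one_div_lt he
      refine ⟨N, fun m hm k hk => ?_⟩
      have hmem : ∀ j, N ≤ j → f (a j) ∈ Metric.ball x (ε N) := by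
        intro j hj
        refine Metric.ball_subset_ball ?_ (ha j)
        exact le_trans (le_trans (hδanti hj) (hδδ0 N)) (hδ0ε N)
      exact lt_trans (hεprop N (a m) (a k) (hmem m hm) (hmem k hk)) hN
    obtain ⟨t, ht⟩ := cauchySeq_tendsto_of_complete hcauchy
    have h1 : Tendsto (fun n => f (a n)) atTop (𝓝 (f t)) :=
      (hf.continuous.tendsto t).comp ht
    have h2 : Tendsto (fun n => f (a n)) atTop (𝓝 x) := by
      rw [tendsto_iff_dist_tendsto_zero]
      refine squeeze_zero (g := fun n : ℕ => 1 / ((n:ℝ) + 1)) (fun n => dist_nonneg)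
        (fun n => ?_) tendsto_one_div_add_atTop_nhds_zero_nat
      exact le_of_lt (lt_of_lt_of_le (Metric.mem_ball.1 (ha n))
        (le_trans (hδδ0 n) (hδ0le n)))
    exact ⟨t, tendsto_nhds_unique h1 h2⟩
  have : Set.range f = ⋂ n, U n :=
    Set.Subset.antisymm (Set.subset_iInter hrsub) hinter
  rw [this]
  exact IsGδ.iInter_of_isOpen hUopen

/-- A commutative topological group whose topology is completely metrizable is complete
for its canonical uniformity. -/
theorem aux_completeSpace_toUniformSpace
    {G : Type*} [AddCommGroup G] [ts : TopologicalSpace G] [IsTopologicalAddGroup G]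
    (h : ∃ m : MetricSpace G, m.toUniformSpace.toTopologicalSpace = ts ∧
        @CompleteSpace G m.toUniformSpace) :
    @CompleteSpace G (IsTopologicalAddGroup.rightUniformSpace G) := by
  obtain ⟨m, hm, hmc⟩ := h
  subst hm
  letI u : UniformSpace G := IsTopologicalAddGroup.rightUniformSpace G
  haveI hUAG : @IsUniformAddGroup G u _ := isUniformAddGroup_of_addCommGroup
  haveI hT2 : T2Space G := by letI := m; exact inferInstance
  haveI hn0 : (𝓝 (0:G)).IsCountablyGenerated := by letI := m; exact inferInstance
  haveI hcg : (𝓤 G).IsCountablyGenerated :=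
    IsUniformAddGroup.uniformity_countably_generated
  letI mG : MetricSpace G := UniformSpace.metricSpace G
  haveI : IsUniformAddGroup G := hUAG
  have hdense : Dense (Set.range ((↑) : G → UniformSpace.Completion G)) :=
    UniformSpace.Completion.denseRange_coe
  have hemb : Topology.IsEmbedding ((↑) : G → UniformSpace.Completion G) :=
    (UniformSpace.Completion.isUniformEmbedding_coe G).isEmbedding
  have hGδ : IsGδ (Set.range ((↑) : G → UniformSpace.Completion G)) :=
    @isGδ_range_of_dense_aux G (UniformSpace.Completion G) m hmc _ _ hemb hdense
  set S := Set.range ((↑) : G → UniformSpace.Completion G) with hS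
  have hsurj : Surjective ((↑) : G → UniformSpace.Completion G) := by
    intro h
    have hPGδ : IsGδ ((fun x => x - h) ⁻¹' S) :=
      hGδ.preimage' (continuous_id.sub continuous_const)
    have hPdense : Dense ((fun x => x - h) ⁻¹' S) :=
      hdense.preimage (Homeomorph.subRight h).isOpenMap
    haveI : Nonempty (UniformSpace.Completion G) := ⟨h⟩
    obtain ⟨z, hzP, hzS⟩ :=
      (Dense.inter_of_Gδ hPGδ hGδ hPdense hdense).nonempty
    obtain ⟨a, ha⟩ := hzP
    obtain ⟨b, hb⟩ := hzS
    refine ⟨b - a, ?_⟩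
    rw [UniformSpace.Completion.coe_sub, ha, hb]
    simp
  have : CompleteSpace G :=
    ((UniformSpace.Completion.isUniformEmbedding_coe G).isUniformInducing.completeSpace_congr
      hsurj).mpr inferInstance
  exact this

/-- Open mapping theorem for F-spaces. -/
theorem isOpenMap_of_surjective_aux {𝕜 E F : Type*} [NontriviallyNormedField 𝕜]
    [AddCommGroup E] [Module 𝕜 E] [tE : TopologicalSpace E]
    [IsTopologicalAddGroup E] [ContinuousSMul 𝕜 E]
    [AddCommGroup F] [Module 𝕜 F] [tF : TopologicalSpace F]
    [IsTopologicalAddGroup F] [ContinuousSMul 𝕜 F]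
    (hE : ∃ m : MetricSpace E, m.toUniformSpace.toTopologicalSpace = tE ∧
      @CompleteSpace E m.toUniformSpace)
    (hF : ∃ m : MetricSpace F, m.toUniformSpace.toTopologicalSpace = tF ∧
      @CompleteSpace F m.toUniformSpace)
    (f : E →L[𝕜] F) (hsurj : Function.Surjective f) : IsOpenMap f := by
  have hEc : @CompleteSpace E (IsTopologicalAddGroup.rightUniformSpace E) :=
    aux_completeSpace_toUniformSpace hE
  obtain ⟨mE, hmE, hcE⟩ := hE
  obtain ⟨mF, hmF, hcF⟩ := hF
  subst hmE
  subst hmF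
  haveI : T2Space F := by letI := mF; exact inferInstance
  haveI : BaireSpace F := by
    letI := mF
    haveI : CompleteSpace F := hcF
    exact inferInstance
  -- countable bases of neighborhoods of 0
  have hDE := @Metric.nhds_basis_ball_inv_nat_succ E mE.toPseudoMetricSpace 0
  have hCF := @Metric.nhds_basis_ball_inv_nat_succ F mF.toPseudoMetricSpace 0
  set D : ℕ → Set E := fun n => @Metric.ball E mE.toPseudoMetricSpace 0 (1 / (n + 1)) with hD
  set C : ℕ → Set F := fun n => @Metric.ball F mF.toPseudoMetricSpace 0 (1 / (n + 1)) with hC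
  have hDmem : ∀ n, D n ∈ 𝓝 (0 : E) := fun n => hDE.mem_of_mem trivial
  have hCmem : ∀ n, C n ∈ 𝓝 (0 : F) := fun n => hCF.mem_of_mem trivial
  have hDanti : ∀ k n : ℕ, k ≤ n → D n ⊆ D k := fun k n hkn =>
    Metric.ball_subset_ball (by
      have hk : (k : ℝ) + 1 ≤ (n : ℝ) + 1 := by
        have : (k : ℝ) ≤ n := by exact_mod_cast hkn
        linarith
      exact one_div_le_one_div_of_le (by positivity) hk)
  have hCanti : ∀ k n : ℕ, k ≤ n → C n ⊆ C k := fun k n hkn =>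
    Metric.ball_subset_ball (by
      have hk : (k : ℝ) + 1 ≤ (n : ℝ) + 1 := by
        have : (k : ℝ) ≤ n := by exact_mod_cast hkn
        linarith
      exact one_div_le_one_div_of_le (by positivity) hk)
  -- Step 1 (Baire): closures of images of neighborhoods of 0 are neighborhoods of 0
  obtain ⟨c, hc⟩ := NormedField.exists_one_lt_norm 𝕜
  have hc0 : c ≠ 0 := fun h => by simp [h] at hc; linarith
  have P1 : ∀ W ∈ 𝓝 (0 : E), closure (f '' W) ∈ 𝓝 (0 : F) := by
    intro W hW
    obtain ⟨V, hVm, _, hVs, hVa⟩ := exists_closed_nhds_zero_neg_eq_add_subset hW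
    -- V absorbs every point
    have habs : ∀ x : E, ∃ n : ℕ, x ∈ c ^ n • V := by
      intro x
      have hinv : ‖c⁻¹‖ < 1 := by
        rw [norm_inv]
        exact inv_lt_one_of_one_lt₀ hc
      have htend : Tendsto (fun n : ℕ => (c⁻¹) ^ n • x) atTop (𝓝 0) := by
        have := (tendsto_pow_atTop_nhds_zero_of_norm_lt_one hinv).smul_const x
        rwa [zero_smul] at this
      obtain ⟨n, hn⟩ := (htend.eventually_mem hVm).exists
      refine ⟨n, ⟨(c⁻¹) ^ n • x, hn, ?_⟩⟩
      show c ^ n • c⁻¹ ^ n • x = x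
      rw [smul_smul, ← mul_pow, mul_inv_cancel₀ hc0, one_pow, one_smul]
    -- Baire
    have hcover : ⋃ n : ℕ, closure (c ^ n • (f '' V)) = univ := by
      rw [eq_univ_iff_forall]
      intro y
      obtain ⟨x, rfl⟩ := hsurj y
      obtain ⟨n, v, hv, hxv⟩ := habs x
      refine mem_iUnion.2 ⟨n, subset_closure ?_⟩
      refine ⟨f v, ⟨v, hv, rfl⟩, ?_⟩
      rw [← hxv]
      exact (map_smul f (c ^ n) v).symm
    obtain ⟨n, hn⟩ := nonempty_interior_of_iUnion_of_closed
      (fun n : ℕ => isClosed_closure (s := c ^ n • (f '' V))) hcover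
    -- transfer interior through the scaling homeomorphism
    have hne : (interior (closure (f '' V))).Nonempty := by
      let e : F ≃ₜ F := Homeomorph.smulOfNeZero (c ^ n) (pow_ne_zero n hc0)
      have h1 : c ^ n • (f '' V) = e '' (f '' V) := by
        simp [e, Homeomorph.smulOfNeZero]
        rfl
      rw [h1, ← e.image_closure, ← e.image_interior] at hn
      exact hn.of_image
    obtain ⟨z, hz⟩ := hne
    have hzc : z ∈ closure (f '' V) := interior_subset hz
    have hNopen : IsOpen ((fun w : F => w + z) ⁻¹' interior (closure (f '' V))) :=
      isOpen_interior.preimage (continuous_id.add continuous_const)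
    have h0N : (0 : F) ∈ (fun w : F => w + z) ⁻¹' interior (closure (f '' V)) := by
      simp [hz]
    refine Filter.mem_of_superset (hNopen.mem_nhds h0N) ?_
    intro w hw
    have hw' : w + z ∈ closure (f '' V) := interior_subset hw
    have h2 : (w + z) - z ∈ closure (f '' W) := by
      refine map_mem_closure₂ (continuous_fst.sub continuous_snd) hw' hzc
        fun a ha b hb => ?_
      obtain ⟨v1, hv1, rfl⟩ := ha
      obtain ⟨v2, hv2, rfl⟩ := hb
      refine ⟨v1 - v2, ?_, (map_sub f v1 v2)⟩
      have hnv2 : -v2 ∈ V := by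
        rw [← hVs]
        exact Set.neg_mem_neg.2 hv2
      have hmm := Set.add_mem_add hv1 hnv2
      rw [← sub_eq_add_neg] at hmm
      exact hVa hmm
    rwa [add_sub_cancel_right] at h2
  -- Step 2: images of neighborhoods of 0 are neighborhoods of 0
  have P2 : ∀ W ∈ 𝓝 (0 : E), f '' W ∈ 𝓝 (0 : F) := by
    intro W hW
    have key : ∀ U : Set E, U ∈ 𝓝 (0 : E) → ∃ A : Set E, A ∈ 𝓝 (0 : E) ∧ -A = A ∧ A + A ⊆ U := by
      intro U hU
      obtain ⟨V, h1, _, h3, h4⟩ := exists_closed_nhds_zero_neg_eq_add_subset hU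
      exact ⟨V, h1, h3, h4⟩
    choose! g hg1 hg2 hg3 using key
    have hfpre : ∀ n : ℕ, f ⁻¹' C n ∈ 𝓝 (0 : E) := by
      intro n
      refine f.continuous.continuousAt.preimage_mem_nhds ?_
      rw [map_zero]
      exact hCmem n
    let A : ℕ → Set E := fun n =>
      Nat.rec (g (W ∩ D 0 ∩ f ⁻¹' C 0)) (fun n An => g (An ∩ D (n + 1) ∩ f ⁻¹' C (n + 1))) n
    let I : ℕ → Set E := fun n =>
      Nat.rec (W ∩ D 0 ∩ f ⁻¹' C 0) (fun n _ => A n ∩ D (n + 1) ∩ f ⁻¹' C (n + 1)) n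
    have hAI : ∀ n, A n = g (I n) := by
      intro n
      cases n with
      | zero => rfl
      | succ n => rfl
    have hImem : ∀ n, I n ∈ 𝓝 (0 : E) ∧ A n ∈ 𝓝 (0 : E) := by
      intro n
      induction n with
      | zero =>
        have hI : I 0 ∈ 𝓝 (0 : E) := inter_mem (inter_mem hW (hDmem 0)) (hfpre 0)
        exact ⟨hI, by rw [hAI 0]; exact hg1 _ hI⟩
      | succ n ih =>
        have hI : I (n + 1) ∈ 𝓝 (0 : E) :=
          inter_mem (inter_mem ih.2 (hDmem (n + 1))) (hfpre (n + 1))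
        exact ⟨hI, by rw [hAI (n + 1)]; exact hg1 _ hI⟩
    have hAmem : ∀ n, A n ∈ 𝓝 (0 : E) := fun n => (hImem n).2
    have hAsymm : ∀ n, -A n = A n := fun n => by rw [hAI n]; exact hg2 _ (hImem n).1
    have hAadd : ∀ n, A n + A n ⊆ I n := fun n => by rw [hAI n]; exact hg3 _ (hImem n).1
    have hAsub : ∀ n, A n ⊆ I n := by
      intro n v hv
      have h0 : (0 : E) ∈ A n := mem_of_mem_nhds (hAmem n)
      have := hAadd n (Set.add_mem_add hv h0)
      rwa [add_zero] at this
    have hIsubA : ∀ n, I (n + 1) ⊆ A n := fun n =>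
      (Set.inter_subset_left.trans Set.inter_subset_left)
    have hAC : ∀ n, A n ⊆ f ⁻¹' C n := by
      intro n
      refine (hAsub n).trans ?_
      cases n with
      | zero => exact Set.inter_subset_right
      | succ n => exact Set.inter_subset_right
    have hAD : ∀ n, A n ⊆ D n := by
      intro n
      refine (hAsub n).trans ?_
      cases n with
      | zero => exact Set.inter_subset_left.trans Set.inter_subset_right
      | succ n => exact Set.inter_subset_left.trans Set.inter_subset_right
    have hA0W : A 0 + A 0 ⊆ W :=
      (hAadd 0).trans (Set.inter_subset_left.trans Set.inter_subset_left)
    -- the iterative construction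
    suffices hcl : closure (f '' A 1) ⊆ f '' W by
      exact Filter.mem_of_superset (P1 _ (hAmem 1)) hcl
    intro y hy
    have step : ∀ (n : ℕ) (xn : E), y - f xn ∈ closure (f '' A (n + 1)) →
        ∃ x' : E, x' - xn ∈ A (n + 1) ∧ y - f x' ∈ closure (f '' A (n + 2)) := by
      intro n xn hr
      have hN : closure (f '' A (n + 2)) ∈ 𝓝 (0 : F) := P1 _ (hAmem (n + 2))
      have hnhd : {w : F | (y - f xn) - w ∈ closure (f '' A (n + 2))} ∈ 𝓝 (y - f xn) := by
        have hcont : ContinuousAt (fun w : F => (y - f xn) - w) (y - f xn) :=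
          (continuous_const.sub continuous_id).continuousAt
        refine hcont.preimage_mem_nhds ?_
        rw [sub_self]
        exact hN
      obtain ⟨w, hw1, hw2⟩ := (mem_closure_iff_nhds.1 hr) _ hnhd
      obtain ⟨v, hv, rfl⟩ := hw2
      refine ⟨xn + v, by simpa using hv, ?_⟩
      have : y - f (xn + v) = (y - f xn) - f v := by
        rw [map_add]
        abel
      rw [this]
      exact hw1
    choose! next hnext1 hnext2 using step
    let x : ℕ → E := fun n => Nat.rec 0 (fun n xn => next n xn) n
    have hx0 : x 0 = 0 := rfl
    have hxsucc : ∀ n, x (n + 1) = next n (x n) := fun n => rfl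
    have hx : ∀ n, y - f (x n) ∈ closure (f '' A (n + 1)) := by
      intro n
      induction n with
      | zero => simpa [hx0, map_zero] using hy
      | succ n ih => rw [hxsucc]; exact hnext2 n (x n) ih
    have hinc : ∀ n, x (n + 1) - x n ∈ A (n + 1) := fun n => by
      rw [hxsucc]; exact hnext1 n (x n) (hx n)
    have hdiff : ∀ (k n : ℕ), x (n + k) - x n ∈ A n := by
      intro k
      induction k with
      | zero =>
        intro n
        simpa using mem_of_mem_nhds (hAmem n)
      | succ k ih =>
        intro n
        have h1 : x (n + 1 + k) - x (n + 1) ∈ A (n + 1) := ih (n + 1)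
        have h2 : x (n + 1) - x n ∈ A (n + 1) := hinc n
        have h3 := Set.add_mem_add h1 h2
        have heq : x (n + 1 + k) - x (n + 1) + (x (n + 1) - x n) = x (n + (k + 1)) - x n := by
          have hnk : n + 1 + k = n + (k + 1) := by omega
          rw [hnk]; abel
        rw [heq] at h3
        exact hIsubA n (hAadd (n + 1) h3)
    -- convergence of the sequence `x` using completeness of the group uniformity
    letI uE : UniformSpace E := IsTopologicalAddGroup.rightUniformSpace E
    haveI : IsUniformAddGroup E := isUniformAddGroup_of_addCommGroup
    haveI : CompleteSpace E := hEc
    have hcauchy : CauchySeq x := by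
      refine cauchySeq_of_controlled (fun n => {p : E × E | p.2 - p.1 ∈ A n + A n}) ?_ ?_
      · intro s hs
        rw [uniformity_eq_comap_nhds_zero' E] at hs
        obtain ⟨Z, hZ, hZs⟩ := hs
        obtain ⟨k, -, hk⟩ := hDE.mem_iff.1 hZ
        refine ⟨k + 1, fun p hp => hZs ?_⟩
        have : p.2 - p.1 ∈ A k := hIsubA k (hAadd (k + 1) hp)
        exact hk (hAD k (by rw [sub_eq_add_neg] at this; exact this))
      · intro N m n hm hn
        have h1 : x n - x N ∈ A N := by
          have := hdiff (n - N) N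
          rwa [Nat.add_sub_cancel' hn] at this
        have h2 : x m - x N ∈ A N := by
          have := hdiff (m - N) N
          rwa [Nat.add_sub_cancel' hm] at this
        have h2' : -(x m - x N) ∈ A N := by
          rw [← hAsymm N]
          exact Set.neg_mem_neg.2 h2
        have h3 := Set.add_mem_add h1 h2'
        have heq : x n - x N + -(x m - x N) = x n - x m := by abel
        rw [heq] at h3
        exact h3
    obtain ⟨ℓ, hℓ⟩ := cauchySeq_tendsto_of_complete hcauchy
    have hxmem : ∀ n, x n ∈ A 0 := by
      intro n
      have := hdiff n 0
      simpa [hx0] using this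
    have hl1 : ℓ ∈ closure (A 0) := mem_closure_of_tendsto hℓ (Eventually.of_forall hxmem)
    have hlW : ℓ ∈ W := by
      have : ℓ ∈ A 0 + A 0 := by
        have hnhd : {s : E | ℓ - s ∈ A 0} ∈ 𝓝 ℓ := by
          have hcont : ContinuousAt (fun s : E => ℓ - s) ℓ :=
            (continuous_const.sub continuous_id).continuousAt
          refine hcont.preimage_mem_nhds ?_
          rw [sub_self]
          exact hAmem 0
        obtain ⟨s, hs1, hs2⟩ := (mem_closure_iff_nhds.1 hl1) _ hnhd
        have hs1' : ℓ - s ∈ A 0 := hs1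
        have hmem := Set.add_mem_add hs2 hs1'
        have heq : s + (ℓ - s) = ℓ := by abel
        rwa [heq] at hmem
      exact hA0W this
    have hfl : f ℓ = y := by
      have h1 : Tendsto (fun n => f (x n)) atTop (𝓝 (f ℓ)) :=
        (f.continuous.tendsto ℓ).comp hℓ
      have h2 : Tendsto (fun n => y - f (x n)) atTop (𝓝 0) := by
        refine Filter.tendsto_def.2 fun Z hZ => ?_
        obtain ⟨V', hV'm, hV'c, _, hV'a⟩ := exists_closed_nhds_zero_neg_eq_add_subset hZ
        have hV'sub : V' ⊆ Z := by
          intro v hv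
          have h0 : (0 : F) ∈ V' := mem_of_mem_nhds hV'm
          have := hV'a (Set.add_mem_add hv h0)
          rwa [add_zero] at this
        obtain ⟨k, -, hk⟩ := hCF.mem_iff.1 hV'm
        refine mem_of_superset (mem_atTop k) fun n (hn : k ≤ n) => ?_
        have hmem : y - f (x n) ∈ closure (C (n + 1)) :=
          closure_mono (Set.image_subset_iff.2 (hAC (n + 1))) (hx n)
        have hsub2 : C (n + 1) ⊆ C k := hCanti k (n + 1) (by omega)
        have hcl : y - f (x n) ∈ closure V' := closure_mono (hsub2.trans hk) hmem
        rw [hV'c.closure_eq] at hcl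
        exact hV'sub hcl
      have h3 : Tendsto (fun n => y - f (x n) + f (x n)) atTop (𝓝 (0 + f ℓ)) := h2.add h1
      simp only [sub_add_cancel, zero_add] at h3
      exact (tendsto_nhds_unique tendsto_const_nhds h3).symm
    exact ⟨ℓ, hlW, hfl⟩
  -- conclude
  intro s hs
  rw [isOpen_iff_mem_nhds]
  rintro _ ⟨xx, hxx, rfl⟩
  have hW : (fun v : E => xx + v) ⁻¹' s ∈ 𝓝 (0 : E) := by
    have hcont : ContinuousAt (fun v : E => xx + v) 0 :=
      (continuous_const.add continuous_id).continuousAt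
    refine hcont.preimage_mem_nhds ?_
    rw [add_zero]
    exact hs.mem_nhds hxx
  have himg := P2 _ hW
  have hN' : (fun z : F => z - f xx) ⁻¹' (f '' ((fun v : E => xx + v) ⁻¹' s)) ∈ 𝓝 (f xx) := by
    have hcont : ContinuousAt (fun z : F => z - f xx) (f xx) :=
      (continuous_id.sub continuous_const).continuousAt
    refine hcont.preimage_mem_nhds ?_
    rw [sub_self]
    exact himg
  refine mem_of_superset hN' ?_
  rintro z ⟨w, hw, hfw⟩
  refine ⟨xx + w, hw, ?_⟩
  rw [map_add, hfw]
  simp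

/-- Complete metrizability transports along homeomorphisms. -/
theorem exists_complete_metric_of_homeomorph {X Y : Type*} [MetricSpace Y] [CompleteSpace Y]
    [tX : TopologicalSpace X] (h : X ≃ₜ Y) :
    ∃ m : MetricSpace X, m.toUniformSpace.toTopologicalSpace = tX ∧
      @CompleteSpace X m.toUniformSpace := by
  refine ⟨MetricSpace.induced h h.injective ‹_›, ?_, ?_⟩
  · letI m := MetricSpace.induced h h.injective ‹MetricSpace Y›
    have h1 : m.toUniformSpace = UniformSpace.comap h inferInstance := rfl
    rw [h1]
    rw [UniformSpace.toTopologicalSpace_comap]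
    exact (h.isInducing.eq_induced).symm
  · letI m := MetricSpace.induced h h.injective ‹MetricSpace Y›
    have hiso : @Isometry X Y m.toPseudoEMetricSpace _ h := fun a b => rfl
    have hue : @IsUniformEmbedding X Y m.toUniformSpace _ h := hiso.isUniformEmbedding
    exact (hue.isUniformInducing.completeSpace_congr h.surjective).mpr ‹_›

/-- The product of two completely metrizable topologies is completely metrizable. -/
theorem exists_complete_metric_prod {X Y : Type*} [tX : TopologicalSpace X]
    [tY : TopologicalSpace Y]
    (hX : ∃ m : MetricSpace X, m.toUniformSpace.toTopologicalSpace = tX ∧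
      @CompleteSpace X m.toUniformSpace)
    (hY : ∃ m : MetricSpace Y, m.toUniformSpace.toTopologicalSpace = tY ∧
      @CompleteSpace Y m.toUniformSpace) :
    ∃ m : MetricSpace (X × Y),
      m.toUniformSpace.toTopologicalSpace = (instTopologicalSpaceProd : TopologicalSpace (X × Y)) ∧
      @CompleteSpace (X × Y) m.toUniformSpace := by
  obtain ⟨mX, hmX, hcX⟩ := hX
  obtain ⟨mY, hmY, hcY⟩ := hY
  subst hmX
  subst hmY
  letI := mX
  letI := mY
  haveI : CompleteSpace X := hcX
  haveI : CompleteSpace Y := hcY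
  exact ⟨Prod.metricSpaceMax, rfl, inferInstance⟩

theorem range_closed_of_finite_codimension
    (𝕜 : Type*) [NontriviallyNormedField 𝕜] [CompleteSpace 𝕜]
    (E F : Type*)
    [AddCommGroup E] [Module 𝕜 E] [TopologicalSpace E]
    [IsTopologicalAddGroup E] [ContinuousSMul 𝕜 E] [T2Space E]
    [AddCommGroup F] [Module 𝕜 F] [TopologicalSpace F]
    [IsTopologicalAddGroup F] [ContinuousSMul 𝕜 F] [T2Space F]
    -- the topology of E is completely metrizable
    (hE : ∃ m : MetricSpace E,
      m.toUniformSpace.toTopologicalSpace = ‹TopologicalSpace E› ∧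
      @CompleteSpace E m.toUniformSpace)
    -- the topology of F is completely metrizable
    (hF : ∃ m : MetricSpace F,
      m.toUniformSpace.toTopologicalSpace = ‹TopologicalSpace F› ∧
      @CompleteSpace F m.toUniformSpace)
    (T : E →L[𝕜] F)
    (hfin : FiniteDimensional 𝕜 (F ⧸ LinearMap.range (T : E →ₗ[𝕜] F))) :
    IsClosed (LinearMap.range (T : E →ₗ[𝕜] F) : Set F) := by
  set N := LinearMap.range (T : E →ₗ[𝕜] F) with hNdef
  obtain ⟨M, hM⟩ := Submodule.exists_isCompl N
  haveI : FiniteDimensional 𝕜 ↥M :=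
    (Submodule.quotientEquivOfIsCompl N M hM).finiteDimensional
  -- M is completely metrizable
  have hMmetr : ∃ m : MetricSpace ↥M, m.toUniformSpace.toTopologicalSpace =
      (inferInstance : TopologicalSpace ↥M) ∧ @CompleteSpace ↥M m.toUniformSpace := by
    let b := Module.finBasis 𝕜 ↥M
    let e : ↥M ≃L[𝕜] (Fin (Module.finrank 𝕜 ↥M) → 𝕜) := b.equivFun.toContinuousLinearEquiv
    exact exists_complete_metric_of_homeomorph e.toHomeomorph
  have hEM := exists_complete_metric_prod hE hMmetr
  -- the combined map
  let Φ : (E × ↥M) →L[𝕜] F := T.coprod (Submodule.subtypeL M)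
  have hΦsurj : Function.Surjective Φ := by
    intro y
    have hy : y ∈ N ⊔ M := by rw [hM.sup_eq_top]; trivial
    obtain ⟨a, ha, b, hb, rfl⟩ := Submodule.mem_sup.1 hy
    obtain ⟨xa, hxa⟩ := ha
    refine ⟨(xa, ⟨b, hb⟩), ?_⟩
    simp only [Φ, ContinuousLinearMap.coprod_apply, Submodule.subtypeL_apply]
    have : T xa = a := hxa
    rw [this]
  have hopen := isOpenMap_of_surjective_aux hEM hF Φ hΦsurj
  have hiff : ∀ p : E × ↥M, Φ p ∈ N ↔ p.2 = 0 := by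
    intro p
    have hTp : T p.1 ∈ N := LinearMap.mem_range_self _ p.1
    constructor
    · intro h
      have hsub : (p.2 : F) ∈ N := by
        have := N.sub_mem h hTp
        simpa [Φ] using this
      have : (p.2 : F) = 0 := Submodule.disjoint_def.1 hM.disjoint _ hsub p.2.2
      exact Subtype.ext this
    · intro h
      simp only [Φ, ContinuousLinearMap.coprod_apply, Submodule.subtypeL_apply, h]
      simpa using hTp
  have hpre : Φ ⁻¹' ((N : Set F)ᶜ) = (Prod.snd ⁻¹' ({0} : Set ↥M))ᶜ := by
    ext p
    simp only [Set.mem_preimage, Set.mem_compl_iff, Set.mem_singleton_iff, SetLike.mem_coe]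
    rw [hiff p]
  have hco : IsOpen ((N : Set F)ᶜ) := by
    have himg : Φ '' (Φ ⁻¹' ((N : Set F)ᶜ)) = (N : Set F)ᶜ :=
      Set.image_preimage_eq _ hΦsurj
    rw [← himg]
    apply hopen
    rw [hpre]
    exact (isClosed_singleton.preimage continuous_snd).isOpen_compl
  rw [← isClosed_compl_iff] at *
  simpa using hco
end
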